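/- arXiv:2203.03101 — 9 statements merged into one kernel-verified Lean document; each statement's English description precedes it below -/
import Mathlib

section
/- Let X be an Abelian group with a binary relation ⊥ satisfying: (i) x ⊥ y implies x ⊥ -y, -x ⊥ y and 2x ⊥ 2y; (ii) for every x ∈ X there exists y ∈ X with x ⊥ y and x+y ⊥ x-y. Let Y be a β-homogeneous F-space with β > 0 and let ε ≥ 0. If f : X → Y satisfies ‖f(x+y) - f(x) - f(y)‖ ≤ ε whenever x ⊥ y, then ‖f(2x) - (3/8)·f(4x) + (1/8)·f(-4x)‖ ≤ ((2^(β+2) + 3^(β+1) + 3)/8^β)·ε for all x ∈ X. -/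
theorem stmt0 {X Y : Type*} [AddCommGroup X] [AddCommGroup Y] [Module ℝ Y]
    (perp : X → X → Prop)
    (hperp1 : ∀ x y, perp x y → perp x (-y) ∧ perp (-x) y ∧ perp (2 • x) (2 • y))
    (hperp2 : ∀ x : X, ∃ y : X, perp x y ∧ perp (x + y) (x - y))
    (β : ℝ) (hβ : 0 < β)
    (N : Y → ℝ)
    (hN0 : ∀ y : Y, N y = 0 ↔ y = 0)
    (htri : ∀ y z : Y, N (y + z) ≤ N y + N z)
    (hhom : ∀ (t : ℝ) (y : Y), N (t • y) = |t| ^ β * N y)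
    (ε : ℝ) (hε : 0 ≤ ε)
    (f : X → Y)
    (hf : ∀ x y, perp x y → N (f (x + y) - f x - f y) ≤ ε) :
    ∀ x : X, N (f (2 • x) - (3 / 8 : ℝ) • f (4 • x) + (1 / 8 : ℝ) • f (-(4 • x)))
      ≤ ((2 : ℝ) ^ (β + 2) + (3 : ℝ) ^ (β + 1) + 3) / (8 : ℝ) ^ β * ε := by
  intro x
  have hNneg : ∀ z : Y, N (-z) = N z := by
    intro z
    have := hhom (-1) z
    simpa [Real.one_rpow] using this
  obtain ⟨y, hxy, hs⟩ := hperp2 x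
  -- basic perp facts
  have hxny : perp x (-y) := (hperp1 _ _ hxy).1
  have hnxy : perp (-x) y := (hperp1 _ _ hxy).2.1
  have hs2 : perp (x + y) (-(x - y)) := (hperp1 _ _ hs).1
  have hs3 : perp (-(x + y)) (x - y) := (hperp1 _ _ hs).2.1
  have hs4 : perp (-(x + y)) (-(x - y)) := (hperp1 _ _ hs3).1
  have d1 : perp (2 • x) (2 • y) := (hperp1 _ _ hxy).2.2
  have d2 : perp (2 • x) (-(2 • y)) := (hperp1 _ _ d1).1
  have d3 : perp (-(2 • x)) (2 • y) := (hperp1 _ _ d1).2.1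
  have d4 : perp (-(2 • x)) (-(2 • y)) := (hperp1 _ _ d3).1
  have ds : perp (2 • (x + y)) (2 • (x - y)) := (hperp1 _ _ hs).2.2
  have ds3 : perp (-(2 • (x + y))) (2 • (x - y)) := (hperp1 _ _ ds).2.1
  have ds4 : perp (-(2 • (x + y))) (-(2 • (x - y))) := (hperp1 _ _ ds3).1
  -- the ten ε-estimates
  have h1 := hf _ _ ds
  rw [show (2 • (x + y) + 2 • (x - y) : X) = 4 • x from by abel] at h1
  have h2 := hf _ _ d1
  rw [show (2 • x + 2 • y : X) = 2 • (x + y) from by abel] at h2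
  have h3 := hf _ _ d2
  rw [show (2 • x + -(2 • y) : X) = 2 • (x - y) from by abel] at h3
  have h4 := hf _ _ ds4
  rw [show (-(2 • (x + y)) + -(2 • (x - y)) : X) = -(4 • x) from by abel] at h4
  have h5 := hf _ _ d4
  rw [show (-(2 • x) + -(2 • y) : X) = -(2 • (x + y)) from by abel] at h5
  have h6 := hf _ _ d3
  rw [show (-(2 • x) + 2 • y : X) = -(2 • (x - y)) from by abel] at h6
  have h7 := hf _ _ hs
  rw [show ((x + y) + (x - y) : X) = 2 • x from by abel] at h7
  have h8 := hf _ _ hs2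
  rw [show ((x + y) + -(x - y) : X) = 2 • y from by abel] at h8
  have h9 := hf _ _ hs4
  rw [show (-(x + y) + -(x - y) : X) = -(2 • x) from by abel] at h9
  have h10 := hf _ _ hs3
  rw [show (-(x + y) + (x - y) : X) = -(2 • y) from by abel] at h10
  -- abbreviations
  set A := f (2 • x) - f (x + y) - f (x - y) with hA
  set B := f (-(2 • x)) - f (-(x + y)) - f (-(x - y)) with hB
  set C := f (2 • y) - f (x + y) - f (-(x - y)) with hC
  set D := f (-(2 • y)) - f (-(x + y)) - f (x - y) with hD
  set P1 := f (4 • x) - f (2 • (x + y)) - f (2 • (x - y)) with hP1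
  set P2 := f (2 • (x + y)) - f (2 • x) - f (2 • y) with hP2
  set P3 := f (2 • (x - y)) - f (2 • x) - f (-(2 • y)) with hP3
  set Q1 := f (-(4 • x)) - f (-(2 • (x + y))) - f (-(2 • (x - y))) with hQ1
  set Q2 := f (-(2 • (x + y))) - f (-(2 • x)) - f (-(2 • y)) with hQ2
  set Q3 := f (-(2 • (x - y))) - f (-(2 • x)) - f (2 • y) with hQ3
  set R := A + B - C - D with hR
  set P := P1 + P2 + P3 with hP
  set Q := Q1 + Q2 + Q3 with hQ
  have hNR : N R ≤ ε + ε + ε + ε := by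
    calc N R = N (A + (B + (-C + -D))) := by rw [show R = A + (B + (-C + -D)) from by rw [hR]; abel]
      _ ≤ N A + N (B + (-C + -D)) := htri _ _
      _ ≤ N A + (N B + N (-C + -D)) := by gcongr; exact htri _ _
      _ ≤ N A + (N B + (N (-C) + N (-D))) := by gcongr; exact htri _ _
      _ = N A + (N B + (N C + N D)) := by rw [hNneg, hNneg]
      _ ≤ ε + (ε + (ε + ε)) := by gcongr <;> assumption
      _ = ε + ε + ε + ε := by ring
  have hNP : N P ≤ ε + ε + ε := by
    calc N P = N (P1 + (P2 + P3)) := by rw [show P = P1 + (P2 + P3) from by rw [hP]; abel]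
      _ ≤ N P1 + N (P2 + P3) := htri _ _
      _ ≤ N P1 + (N P2 + N P3) := by gcongr; exact htri _ _
      _ ≤ ε + (ε + ε) := by gcongr <;> assumption
      _ = ε + ε + ε := by ring
  have hNQ : N Q ≤ ε + ε + ε := by
    calc N Q = N (Q1 + (Q2 + Q3)) := by rw [show Q = Q1 + (Q2 + Q3) from by rw [hQ]; abel]
      _ ≤ N Q1 + N (Q2 + Q3) := htri _ _
      _ ≤ N Q1 + (N Q2 + N Q3) := by gcongr; exact htri _ _
      _ ≤ ε + (ε + ε) := by gcongr <;> assumption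
      _ = ε + ε + ε := by ring
  have key : f (2 • x) - (3 / 8 : ℝ) • f (4 • x) + (1 / 8 : ℝ) • f (-(4 • x))
      = (1 / 4 : ℝ) • R + ((-3 / 8 : ℝ) • P + (1 / 8 : ℝ) • Q) := by
    rw [hR, hP, hQ, hA, hB, hC, hD, hP1, hP2, hP3, hQ1, hQ2, hQ3]
    module
  have h8pos : (0 : ℝ) < (8 : ℝ) ^ β := Real.rpow_pos_of_pos (by norm_num) _
  have e14 : |(1 / 4 : ℝ)| ^ β = (2 : ℝ) ^ β / (8 : ℝ) ^ β := by
    rw [show |(1 / 4 : ℝ)| = 2 / 8 from by norm_num,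
      Real.div_rpow (by norm_num) (by norm_num)]
  have e38 : |(-3 / 8 : ℝ)| ^ β = (3 : ℝ) ^ β / (8 : ℝ) ^ β := by
    rw [show |(-3 / 8 : ℝ)| = 3 / 8 from by norm_num,
      Real.div_rpow (by norm_num) (by norm_num)]
  have e18 : |(1 / 8 : ℝ)| ^ β = 1 / (8 : ℝ) ^ β := by
    rw [show |(1 / 8 : ℝ)| = 1 / 8 from by norm_num,
      Real.div_rpow (by norm_num) (by norm_num), Real.one_rpow]
  have e2 : (2 : ℝ) ^ (β + 2) = (2 : ℝ) ^ β * 4 := by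
    rw [Real.rpow_add (by norm_num : (0:ℝ) < 2)]
    norm_num
  have e3 : (3 : ℝ) ^ (β + 1) = (3 : ℝ) ^ β * 3 := by
    rw [Real.rpow_add (by norm_num : (0:ℝ) < 3), Real.rpow_one]
  calc N (f (2 • x) - (3 / 8 : ℝ) • f (4 • x) + (1 / 8 : ℝ) • f (-(4 • x)))
      = N ((1 / 4 : ℝ) • R + ((-3 / 8 : ℝ) • P + (1 / 8 : ℝ) • Q)) := by rw [key]
    _ ≤ N ((1 / 4 : ℝ) • R) + N ((-3 / 8 : ℝ) • P + (1 / 8 : ℝ) • Q) := htri _ _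
    _ ≤ N ((1 / 4 : ℝ) • R) + (N ((-3 / 8 : ℝ) • P) + N ((1 / 8 : ℝ) • Q)) := by
        gcongr; exact htri _ _
    _ = |(1 / 4 : ℝ)| ^ β * N R + (|(-3 / 8 : ℝ)| ^ β * N P + |(1 / 8 : ℝ)| ^ β * N Q) := by
        rw [hhom, hhom, hhom]
    _ ≤ |(1 / 4 : ℝ)| ^ β * (ε + ε + ε + ε)
        + (|(-3 / 8 : ℝ)| ^ β * (ε + ε + ε) + |(1 / 8 : ℝ)| ^ β * (ε + ε + ε)) := by
        gcongr <;> positivity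
    _ = ((2 : ℝ) ^ (β + 2) + (3 : ℝ) ^ (β + 1) + 3) / (8 : ℝ) ^ β * ε := by
        rw [e14, e38, e18, e2, e3]
        field_simp
        ring
end

section
/- Let Y be a β-homogeneous F-space with β > 0, X an Abelian group, ε ≥ 0, a = (2^(β+2) + 3^(β+1) + 3)/8^β, and suppose f : X → Y satisfies ‖f(2x) - (3/8)f(4x) + (1/8)f(-4x)‖ ≤ a·ε for all x ∈ X. Then for every n ≥ 1 and all x ∈ X, ‖f(2x) - ((2^n+1)/(2·4^n))·f(2^(n+1)x) + ((2^n-1)/(2·4^n))·f(-2^(n+1)x)‖ ≤ b·ε, where b = a·(1 + Σ_{k=2}^∞ (((2^(k-1)+1)/(2·4^(k-1)))^β + ((2^(k-1)-1)/(2·4^(k-1)))^β)). -/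
/-!
Write `D_n(x) = f(2x) - c_n f(2^(n+1) x) + d_n f(-2^(n+1) x)` with
`c_n = (2^n + 1)/(2·4^n)` and `d_n = (2^n - 1)/(2·4^n)`, so that `D_0 = 0` and the hypothesis
bounds the defect `g(x) = D_1(x)`. The recursions `c_(n+1) = (3c_n + d_n)/8` and
`d_(n+1) = (c_n + 3d_n)/8` give `D_(n+1)(x) = D_n(x) + c_n g(2^n x) - d_n g(-2^n x)`, hence by
β-homogeneity `‖D_n(x)‖ ≤ (Σ_(k<n) (c_k^β + d_k^β)) aε`. Since `c_k, d_k ≤ 2^(-k)`, the series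
converges for `β > 0`, and `b = a Σ_k (c_k^β + d_k^β)` because `c_0 = 1`, `d_0 = 0`.
-/

namespace MixedStability

open Finset

noncomputable def posCoeff (n : ℕ) : ℝ := ((2 : ℝ) ^ n + 1) / (2 * 4 ^ n)

noncomputable def negCoeff (n : ℕ) : ℝ := ((2 : ℝ) ^ n - 1) / (2 * 4 ^ n)

@[simp] lemma posCoeff_zero : posCoeff 0 = 1 := by norm_num [posCoeff]

@[simp] lemma negCoeff_zero : negCoeff 0 = 0 := by norm_num [negCoeff]

lemma posCoeff_succ (n : ℕ) : posCoeff (n + 1) = (3 * posCoeff n + negCoeff n) / 8 := by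
  unfold posCoeff negCoeff
  field_simp
  ring

lemma negCoeff_succ (n : ℕ) : negCoeff (n + 1) = (posCoeff n + 3 * negCoeff n) / 8 := by
  unfold posCoeff negCoeff
  field_simp
  ring

lemma negCoeff_nonneg (n : ℕ) : 0 ≤ negCoeff n :=
  div_nonneg (sub_nonneg.2 (one_le_pow₀ one_le_two)) (by positivity)

lemma negCoeff_le_posCoeff (n : ℕ) : negCoeff n ≤ posCoeff n := by
  unfold posCoeff negCoeff
  gcongr
  linarith

lemma posCoeff_nonneg (n : ℕ) : 0 ≤ posCoeff n :=
  (negCoeff_nonneg n).trans (negCoeff_le_posCoeff n)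

lemma posCoeff_le_half_pow (n : ℕ) : posCoeff n ≤ (1 / 2) ^ n := by
  have h4 : (4 : ℝ) ^ n = 2 ^ n * 2 ^ n := by rw [← mul_pow]; norm_num
  rw [posCoeff, div_le_iff₀ (by positivity), h4, one_div_pow]
  field_simp
  linarith [one_le_pow₀ (M₀ := ℝ) one_le_two (n := n)]

lemma coeff_rpow_nonneg (β : ℝ) (k : ℕ) : 0 ≤ posCoeff k ^ β + negCoeff k ^ β :=
  add_nonneg (Real.rpow_nonneg (posCoeff_nonneg k) β) (Real.rpow_nonneg (negCoeff_nonneg k) β)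

lemma summable_coeff_rpow {β : ℝ} (hβ : 0 < β) :
    Summable fun k : ℕ => posCoeff k ^ β + negCoeff k ^ β := by
  have hr : (1 / 2 : ℝ) ^ β < 1 := Real.rpow_lt_one (by norm_num) (by norm_num) hβ
  refine Summable.of_nonneg_of_le (coeff_rpow_nonneg β) (fun k => ?_)
    ((summable_geometric_of_lt_one (by positivity) hr).mul_left 2)
  have hpos : posCoeff k ^ β ≤ ((1 / 2 : ℝ) ^ β) ^ k := by
    rw [Real.rpow_pow_comm (by norm_num)]
    exact Real.rpow_le_rpow (posCoeff_nonneg k) (posCoeff_le_half_pow k) hβ.le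
  have hneg : negCoeff k ^ β ≤ posCoeff k ^ β :=
    Real.rpow_le_rpow (negCoeff_nonneg k) (negCoeff_le_posCoeff k) hβ.le
  linarith

lemma tsum_coeff_rpow {β : ℝ} (hβ : 0 < β) :
    ∑' k : ℕ, (posCoeff k ^ β + negCoeff k ^ β) =
      1 + ∑' k : ℕ, (posCoeff (k + 1) ^ β + negCoeff (k + 1) ^ β) := by
  rw [(summable_coeff_rpow hβ).tsum_eq_zero_add, posCoeff_zero, negCoeff_zero,
    Real.one_rpow, Real.zero_rpow hβ.ne', add_zero]

section HomogeneousFNorm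

variable {Y : Type*} [AddCommGroup Y] [Module ℝ Y] {β : ℝ} {N : Y → ℝ}

lemma map_zero_of_homogeneous (hβ : 0 < β) (hhom : ∀ (t : ℝ) (y : Y), N (t • y) = |t| ^ β * N y) :
    N 0 = 0 := by
  simpa [Real.zero_rpow hβ.ne'] using hhom 0 0

lemma map_neg_of_homogeneous (hhom : ∀ (t : ℝ) (y : Y), N (t • y) = |t| ^ β * N y) (y : Y) :
    N (-y) = N y := by
  simpa using hhom (-1) y

lemma nonneg_of_homogeneous (hβ : 0 < β) (htri : ∀ y z : Y, N (y + z) ≤ N y + N z)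
    (hhom : ∀ (t : ℝ) (y : Y), N (t • y) = |t| ^ β * N y) (y : Y) : 0 ≤ N y := by
  have h := htri y (-y)
  rw [add_neg_cancel, map_zero_of_homogeneous hβ hhom, map_neg_of_homogeneous hhom] at h
  linarith

end HomogeneousFNorm

variable {X Y : Type*} [AddCommGroup X] [AddCommGroup Y] [Module ℝ Y]

lemma approx_succ_eq_add_defect (f : X → Y) (n : ℕ) (x : X) :
    f (2 • x) - posCoeff (n + 1) • f (2 ^ (n + 2) • x) + negCoeff (n + 1) • f (-(2 ^ (n + 2) • x))
      = (f (2 • x) - posCoeff n • f (2 ^ (n + 1) • x) + negCoeff n • f (-(2 ^ (n + 1) • x)))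
        + posCoeff n • (f (2 • (2 ^ n : ℕ) • x) - (3 / 8 : ℝ) • f (4 • (2 ^ n : ℕ) • x)
            + (1 / 8 : ℝ) • f (-(4 • (2 ^ n : ℕ) • x)))
        - negCoeff n • (f (2 • -((2 ^ n : ℕ) • x)) - (3 / 8 : ℝ) • f (4 • -((2 ^ n : ℕ) • x))
            + (1 / 8 : ℝ) • f (-(4 • -((2 ^ n : ℕ) • x)))) := by
  have h2 : 2 • (2 ^ n : ℕ) • x = 2 ^ (n + 1) • x := by rw [smul_smul, pow_succ']
  have h4 : 4 • (2 ^ n : ℕ) • x = 2 ^ (n + 2) • x := by rw [smul_smul]; ring_nf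
  rw [smul_neg, smul_neg, neg_neg, h2, h4, posCoeff_succ, negCoeff_succ]
  module

theorem norm_approx_le_sum_coeff_rpow_mul {β : ℝ} (hβ : 0 < β) {N : Y → ℝ}
    (htri : ∀ y z : Y, N (y + z) ≤ N y + N z)
    (hhom : ∀ (t : ℝ) (y : Y), N (t • y) = |t| ^ β * N y) {f : X → Y} {δ : ℝ}
    (hf : ∀ x : X, N (f (2 • x) - (3 / 8 : ℝ) • f (4 • x) + (1 / 8 : ℝ) • f (-(4 • x))) ≤ δ)
    (n : ℕ) (x : X) :
    N (f (2 • x) - posCoeff n • f (2 ^ (n + 1) • x) + negCoeff n • f (-(2 ^ (n + 1) • x)))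
      ≤ (∑ k ∈ range n, (posCoeff k ^ β + negCoeff k ^ β)) * δ := by
  induction n with
  | zero => simp [map_zero_of_homogeneous hβ hhom]
  | succ n ih =>
    have hsub : ∀ u v w : Y, N (u + v - w) ≤ N u + N v + N w := fun u v w => by
      rw [sub_eq_add_neg, ← map_neg_of_homogeneous hhom w]
      linarith [htri (u + v) (-w), htri u v]
    rw [approx_succ_eq_add_defect]
    refine (hsub _ _ _).trans ?_
    rw [hhom, hhom, abs_of_nonneg (posCoeff_nonneg n), abs_of_nonneg (negCoeff_nonneg n),
      sum_range_succ, add_mul, add_mul, ← add_assoc]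
    gcongr
    · exact Real.rpow_nonneg (posCoeff_nonneg n) β
    · exact hf _
    · exact Real.rpow_nonneg (negCoeff_nonneg n) β
    · exact hf _

end MixedStability

open MixedStability in
theorem stmt1_general {X Y : Type*} [AddCommGroup X] [AddCommGroup Y] [Module ℝ Y]
    (β : ℝ) (hβ : 0 < β)
    (N : Y → ℝ)
    (htri : ∀ y z : Y, N (y + z) ≤ N y + N z)
    (hhom : ∀ (t : ℝ) (y : Y), N (t • y) = |t| ^ β * N y)
    (ε : ℝ)
    (a : ℝ)
    (b : ℝ)
    (hb : b = a * (1 + ∑' k : ℕ,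
      ((((2 : ℝ) ^ (k + 1) + 1) / (2 * (4 : ℝ) ^ (k + 1))) ^ β +
       (((2 : ℝ) ^ (k + 1) - 1) / (2 * (4 : ℝ) ^ (k + 1))) ^ β)))
    (f : X → Y)
    (hf : ∀ x : X, N (f (2 • x) - (3 / 8 : ℝ) • f (4 • x) + (1 / 8 : ℝ) • f (-(4 • x))) ≤ a * ε) :
    ∀ n : ℕ, 1 ≤ n → ∀ x : X,
      N (f (2 • x) - ((((2 : ℝ) ^ n + 1) / (2 * (4 : ℝ) ^ n)) • f (2 ^ (n + 1) • x))
        + ((((2 : ℝ) ^ n - 1) / (2 * (4 : ℝ) ^ n)) • f (-(2 ^ (n + 1) • x)))) ≤ b * ε := by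
  intro n _ x
  have haε : 0 ≤ a * ε := (nonneg_of_homogeneous hβ htri hhom _).trans (hf 0)
  have hb' : b * ε = (∑' k : ℕ, (posCoeff k ^ β + negCoeff k ^ β)) * (a * ε) := by
    rw [tsum_coeff_rpow hβ, hb]
    simp only [posCoeff, negCoeff]
    ring
  rw [hb']
  refine (norm_approx_le_sum_coeff_rpow_mul hβ htri hhom hf n x).trans (mul_le_mul_of_nonneg_right ?_ haε)
  exact (summable_coeff_rpow hβ).sum_le_tsum _ fun k _ => coeff_rpow_nonneg β k

theorem stmt1 {X Y : Type*} [AddCommGroup X] [AddCommGroup Y] [Module ℝ Y]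
    (β : ℝ) (hβ : 0 < β)
    (N : Y → ℝ)
    (hN0 : ∀ y : Y, N y = 0 ↔ y = 0)
    (htri : ∀ y z : Y, N (y + z) ≤ N y + N z)
    (hhom : ∀ (t : ℝ) (y : Y), N (t • y) = |t| ^ β * N y)
    (ε : ℝ) (hε : 0 ≤ ε)
    (a : ℝ) (ha : a = ((2 : ℝ) ^ (β + 2) + (3 : ℝ) ^ (β + 1) + 3) / (8 : ℝ) ^ β)
    (b : ℝ)
    (hb : b = a * (1 + ∑' k : ℕ,
      ((((2 : ℝ) ^ (k + 1) + 1) / (2 * (4 : ℝ) ^ (k + 1))) ^ β +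
       (((2 : ℝ) ^ (k + 1) - 1) / (2 * (4 : ℝ) ^ (k + 1))) ^ β)))
    (f : X → Y)
    (hf : ∀ x : X, N (f (2 • x) - (3 / 8 : ℝ) • f (4 • x) + (1 / 8 : ℝ) • f (-(4 • x))) ≤ a * ε) :
    ∀ n : ℕ, 1 ≤ n → ∀ x : X,
      N (f (2 • x) - ((((2 : ℝ) ^ n + 1) / (2 * (4 : ℝ) ^ n)) • f (2 ^ (n + 1) • x))
        + ((((2 : ℝ) ^ n - 1) / (2 * (4 : ℝ) ^ n)) • f (-(2 ^ (n + 1) • x)))) ≤ b * ε :=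
  stmt1_general β hβ N htri hhom ε a b hb f hf
end

section
/- Let Y be a β-homogeneous F-space with β > 0, X an Abelian group, ε ≥ 0, a = (2^(β+2) + 3^(β+1) + 3)/8^β, and f : X → Y with ‖f(2x) - (3/8)f(4x) + (1/8)f(-4x)‖ ≤ a·ε for all x ∈ X. Define g_n(x) = ((2^n+1)/(2·4^n))·f(2^n x) - ((2^n-1)/(2·4^n))·f(-2^n x). Then ‖g_n(x) - g_{n+1}(x)‖ ≤ (((2^n+1)/(2·4^n))^β + ((2^n-1)/(2·4^n))^β)·a·ε for every n ≥ 1 and x ∈ X. -/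
theorem stmt3 {X Y : Type*} [AddCommGroup X] [AddCommGroup Y] [Module ℝ Y]
    (β : ℝ) (hβ : 0 < β)
    (N : Y → ℝ)
    (hN0 : ∀ y : Y, N y = 0 ↔ y = 0)
    (htri : ∀ y z : Y, N (y + z) ≤ N y + N z)
    (hhom : ∀ (t : ℝ) (y : Y), N (t • y) = |t| ^ β * N y)
    (ε : ℝ) (hε : 0 ≤ ε)
    (a : ℝ) (ha : a = ((2 : ℝ) ^ (β + 2) + (3 : ℝ) ^ (β + 1) + 3) / (8 : ℝ) ^ β)
    (f : X → Y)
    (hf : ∀ x : X, N (f (2 • x) - (3 / 8 : ℝ) • f (4 • x) + (1 / 8 : ℝ) • f (-(4 • x))) ≤ a * ε)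
    (g : ℕ → X → Y)
    (hg : ∀ (n : ℕ) (x : X), g n x =
      (((2 : ℝ) ^ n + 1) / (2 * (4 : ℝ) ^ n)) • f (2 ^ n • x)
        - (((2 : ℝ) ^ n - 1) / (2 * (4 : ℝ) ^ n)) • f (-(2 ^ n • x))) :
    ∀ n : ℕ, 1 ≤ n → ∀ x : X,
      N (g n x - g (n + 1) x) ≤
        ((((2 : ℝ) ^ n + 1) / (2 * (4 : ℝ) ^ n)) ^ β +
         (((2 : ℝ) ^ n - 1) / (2 * (4 : ℝ) ^ n)) ^ β) * a * ε := by
  intro n hn x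
  obtain ⟨m, rfl⟩ : ∃ m, n = m + 1 := ⟨n - 1, by omega⟩
  set c : ℝ := ((2 : ℝ) ^ (m + 1) + 1) / (2 * (4 : ℝ) ^ (m + 1)) with hc
  set d : ℝ := ((2 : ℝ) ^ (m + 1) - 1) / (2 * (4 : ℝ) ^ (m + 1)) with hd
  set A : Y := f (2 ^ (m + 1) • x) - (3 / 8 : ℝ) • f (2 ^ (m + 1 + 1) • x)
      + (1 / 8 : ℝ) • f (-(2 ^ (m + 1 + 1) • x)) with hA
  set B : Y := f (-(2 ^ (m + 1) • x)) - (3 / 8 : ℝ) • f (-(2 ^ (m + 1 + 1) • x))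
      + (1 / 8 : ℝ) • f (2 ^ (m + 1 + 1) • x) with hB
  have e1 : (2 : ℕ) • ((2 ^ m : ℕ) • x) = (2 : ℕ) ^ (m + 1) • x := by
    rw [smul_smul, pow_succ, mul_comm]
  have e2 : (4 : ℕ) • ((2 ^ m : ℕ) • x) = (2 : ℕ) ^ (m + 1 + 1) • x := by
    rw [smul_smul]
    congr 1
    rw [pow_succ, pow_succ]
    ring
  have hNA : N A ≤ a * ε := by
    have := hf ((2 ^ m : ℕ) • x)
    rwa [e1, e2, ← hA] at this
  have hNB : N B ≤ a * ε := by
    have := hf (-((2 ^ m : ℕ) • x))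
    rwa [smul_neg, smul_neg, e1, e2, neg_neg, ← hB] at this
  have key : g (m + 1) x - g (m + 1 + 1) x = c • A + (-d) • B := by
    rw [hg, hg, hA, hB, hc, hd]
    match_scalars <;> (field_simp; try ring)
  have hc0 : 0 ≤ c := by
    rw [hc]; positivity
  have hd0 : 0 ≤ d := by
    rw [hd]
    apply div_nonneg _ (by positivity)
    have : (1 : ℝ) ≤ (2 : ℝ) ^ (m + 1) := one_le_pow₀ one_le_two
    linarith
  have haε : 0 ≤ a * ε := by
    apply mul_nonneg _ hε
    rw [ha]
    positivity
  calc N (g (m + 1) x - g (m + 1 + 1) x) = N (c • A + (-d) • B) := by rw [key]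
    _ ≤ N (c • A) + N ((-d) • B) := htri _ _
    _ = |c| ^ β * N A + |(-d)| ^ β * N B := by rw [hhom, hhom]
    _ = c ^ β * N A + d ^ β * N B := by
        rw [abs_neg, abs_of_nonneg hc0, abs_of_nonneg hd0]
    _ ≤ c ^ β * (a * ε) + d ^ β * (a * ε) := by
        gcongr <;> positivity
    _ = (c ^ β + d ^ β) * a * ε := by ring
end

section
/- Let Y be a complete β-homogeneous F-space with β > 0, X an Abelian group, ε ≥ 0, and f : X → Y satisfying ‖f(2x) - (3/8)f(4x) + (1/8)f(-4x)‖ ≤ ((2^(β+2)+3^(β+1)+3)/8^β)·ε for all x ∈ X. Then for every x ∈ X the sequence g_n(x) = ((2^n+1)/(2·4^n))·f(2^n x) - ((2^n-1)/(2·4^n))·f(-2^n x) is a Cauchy sequence in Y, and hence converges. -/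
/-!
Writing `g n x = (f (2ⁿx) + f (-2ⁿx)) / (2·4ⁿ) + (f (2ⁿx) - f (-2ⁿx)) / (2·2ⁿ)` as the sum of the
quadratic and the additive Hyers approximants, the difference `g n x - g (n+1) x` turns out to be
a combination of the defect of the functional inequality at `±2ⁿ⁻¹x` with coefficients at most
`2⁻ⁿ`. By β-homogeneity its size is `O(2^(-βn))`, a geometric bound, so `(g n x)` is Cauchy, and
completeness provides the limit.
-/

open Filter

def AddGroupSeminorm.ofRpowHomogeneous {Y : Type*} [AddCommGroup Y] [Module ℝ Y] {β : ℝ}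
    (N : Y → ℝ) (map_zero : N 0 = 0) (add_le : ∀ y z, N (y + z) ≤ N y + N z)
    (hhom : ∀ (t : ℝ) (y : Y), N (t • y) = |t| ^ β * N y) : AddGroupSeminorm Y where
  toFun := N
  map_zero' := map_zero
  add_le' := add_le
  neg' y := by simpa using hhom (-1) y

theorem AddGroupSeminorm.cauchy_of_eventually_le_geometric {Y : Type*} [AddCommGroup Y]
    (p : AddGroupSeminorm Y) {u : ℕ → Y} {K r : ℝ} (hr : r < 1)
    (hu : ∀ᶠ n in atTop, p (u n - u (n + 1)) ≤ K * r ^ n) :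
    ∀ δ > (0 : ℝ), ∃ M : ℕ, ∀ m n, M ≤ m → M ≤ n → p (u m - u n) < δ := by
  let := p.toSeminormedAddCommGroup
  obtain ⟨n₀, hn₀⟩ := eventually_atTop.1 hu
  have htail : CauchySeq fun n ↦ u (n + n₀) :=
    cauchySeq_of_le_geometric r (K * r ^ n₀) hr fun n ↦ by
      rw [dist_eq_norm, add_right_comm, mul_assoc, ← pow_add, add_comm n₀]
      exact hn₀ (n + n₀) le_add_self
  intro δ hδ
  obtain ⟨M, hM⟩ := Metric.cauchySeq_iff.1 ((cauchySeq_shift n₀).1 htail) δ hδ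
  exact ⟨M, fun m n hm hn ↦ (dist_eq_norm (u m) (u n)).symm.trans_lt (hM m hm n hn)⟩

noncomputable section

namespace QuadraticAdditive

variable {X Y : Type*} [AddCommGroup X] [AddCommGroup Y] [Module ℝ Y]

def plusCoeff (n : ℕ) : ℝ := ((2 : ℝ) ^ n + 1) / (2 * (4 : ℝ) ^ n)

def minusCoeff (n : ℕ) : ℝ := ((2 : ℝ) ^ n - 1) / (2 * (4 : ℝ) ^ n)

def defect (f : X → Y) (x : X) : Y :=
  f (2 • x) - (3 / 8 : ℝ) • f (4 • x) + (1 / 8 : ℝ) • f (-(4 • x))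

def approx (f : X → Y) (n : ℕ) (x : X) : Y :=
  plusCoeff n • f (2 ^ n • x) - minusCoeff n • f (-(2 ^ n • x))

lemma plusCoeff_succ (n : ℕ) :
    plusCoeff (n + 1) = 3 / 8 * plusCoeff n + 1 / 8 * minusCoeff n := by
  simp only [plusCoeff, minusCoeff]
  field_simp
  ring

lemma minusCoeff_succ (n : ℕ) :
    minusCoeff (n + 1) = 1 / 8 * plusCoeff n + 3 / 8 * minusCoeff n := by
  simp only [plusCoeff, minusCoeff]
  field_simp
  ring

lemma minusCoeff_nonneg (n : ℕ) : 0 ≤ minusCoeff n :=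
  div_nonneg (sub_nonneg.2 (one_le_pow₀ one_le_two)) (by positivity)

lemma minusCoeff_le_plusCoeff (n : ℕ) : minusCoeff n ≤ plusCoeff n := by
  unfold minusCoeff plusCoeff; gcongr; linarith

lemma plusCoeff_le (n : ℕ) : plusCoeff n ≤ ((2 : ℝ) ^ n)⁻¹ := by
  have h1 : (1 : ℝ) ≤ 2 ^ n := one_le_pow₀ one_le_two
  rw [plusCoeff, div_le_iff₀ (by positivity), show (4 : ℝ) ^ n = 2 ^ n * 2 ^ n by
    rw [← mul_pow]; norm_num]
  field_simp
  linarith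

lemma rpow_le_of_le_inv_two_pow {β c : ℝ} (hβ : 0 ≤ β) {n : ℕ} (hc₀ : 0 ≤ c)
    (hc : c ≤ ((2 : ℝ) ^ n)⁻¹) :
    c ^ β ≤ ((2 ^ β)⁻¹) ^ n := by
  calc c ^ β ≤ (((2 : ℝ) ^ n)⁻¹) ^ β := Real.rpow_le_rpow hc₀ hc hβ
    _ = ((2 ^ β)⁻¹) ^ n := by
      rw [Real.inv_rpow (by positivity), ← Real.rpow_natCast_mul zero_le_two, mul_comm,
        Real.rpow_mul_natCast zero_le_two, inv_pow]

lemma approx_sub_approx_succ (f : X → Y) (n : ℕ) {x y : X} (hy : 2 • y = 2 ^ n • x) :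
    approx f n x - approx f (n + 1) x =
      plusCoeff n • defect f y - minusCoeff n • defect f (-y) := by
  have h4 : 4 • y = 2 ^ (n + 1) • x := by
    rw [show 4 = 2 * 2 from rfl, mul_nsmul, hy, ← mul_nsmul, pow_succ]
  simp only [approx, defect, smul_neg, neg_neg, hy, h4, plusCoeff_succ, minusCoeff_succ]
  module

theorem approx_sub_approx_succ_le {β C : ℝ} (p : AddGroupSeminorm Y) (hβ : 0 ≤ β)
    (hhom : ∀ (t : ℝ) (y : Y), p (t • y) = |t| ^ β * p y) {f : X → Y}
    (hf : ∀ x, p (defect f x) ≤ C) (n : ℕ) {x y : X} (hy : 2 • y = 2 ^ n • x) :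
    p (approx f n x - approx f (n + 1) x) ≤ 2 * C * ((2 ^ β)⁻¹) ^ n := by
  have hscaled {c : ℝ} (hc₀ : 0 ≤ c) (hc : c ≤ ((2 : ℝ) ^ n)⁻¹) (z : X) :
      p (c • defect f z) ≤ ((2 ^ β)⁻¹) ^ n * C := by
    rw [hhom, abs_of_nonneg hc₀]
    calc c ^ β * p (defect f z) ≤ ((2 ^ β)⁻¹) ^ n * p (defect f z) :=
          mul_le_mul_of_nonneg_right (rpow_le_of_le_inv_two_pow hβ hc₀ hc) (apply_nonneg _ _)
      _ ≤ ((2 ^ β)⁻¹) ^ n * C := mul_le_mul_of_nonneg_left (hf z) (by positivity)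
  have hminus := minusCoeff_nonneg n
  have hplus := hminus.trans (minusCoeff_le_plusCoeff n)
  calc p (approx f n x - approx f (n + 1) x)
      ≤ p (plusCoeff n • defect f y) + p (minusCoeff n • defect f (-y)) := by
        rw [approx_sub_approx_succ f n hy]
        exact map_sub_le_add p _ _
    _ ≤ 2 * C * ((2 ^ β)⁻¹) ^ n := by
        linarith [hscaled hplus (plusCoeff_le n) y,
          hscaled hminus ((minusCoeff_le_plusCoeff n).trans (plusCoeff_le n)) (-y)]

end QuadraticAdditive

end

theorem stmt4_general {X Y : Type*} [AddCommGroup X] [AddCommGroup Y] [Module ℝ Y]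
    (β : ℝ) (hβ : 0 < β)
    (N : Y → ℝ)
    (hN0 : ∀ y : Y, N y = 0 ↔ y = 0)
    (htri : ∀ y z : Y, N (y + z) ≤ N y + N z)
    (hhom : ∀ (t : ℝ) (y : Y), N (t • y) = |t| ^ β * N y)
    (hcomp : ∀ u : ℕ → Y,
      (∀ δ > (0 : ℝ), ∃ M : ℕ, ∀ m n, M ≤ m → M ≤ n → N (u m - u n) < δ) →
      ∃ l : Y, ∀ δ > (0 : ℝ), ∃ M : ℕ, ∀ n, M ≤ n → N (u n - l) < δ)
    (ε : ℝ)
    (f : X → Y)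
    (hf : ∀ x : X, N (f (2 • x) - (3 / 8 : ℝ) • f (4 • x) + (1 / 8 : ℝ) • f (-(4 • x)))
      ≤ ((2 : ℝ) ^ (β + 2) + (3 : ℝ) ^ (β + 1) + 3) / (8 : ℝ) ^ β * ε)
    (g : ℕ → X → Y)
    (hg : ∀ (n : ℕ) (x : X), g n x =
      (((2 : ℝ) ^ n + 1) / (2 * (4 : ℝ) ^ n)) • f (2 ^ n • x)
        - (((2 : ℝ) ^ n - 1) / (2 * (4 : ℝ) ^ n)) • f (-(2 ^ n • x))) :
    ∀ x : X,
      (∀ δ > (0 : ℝ), ∃ M : ℕ, ∀ m n, M ≤ m → M ≤ n → N (g m x - g n x) < δ) ∧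
      (∃ l : Y, ∀ δ > (0 : ℝ), ∃ M : ℕ, ∀ n, M ≤ n → N (g n x - l) < δ) := by
  let p := AddGroupSeminorm.ofRpowHomogeneous N ((hN0 0).2 rfl) htri hhom
  obtain rfl : g = QuadraticAdditive.approx f := funext fun n ↦ funext (hg n)
  intro x
  have hr : ((2 : ℝ) ^ β)⁻¹ < 1 := inv_lt_one_of_one_lt₀ (Real.one_lt_rpow one_lt_two hβ)
  have hstep : ∀ᶠ n in atTop,
      p (QuadraticAdditive.approx f n x - QuadraticAdditive.approx f (n + 1) x) ≤
        2 * _ * ((2 ^ β)⁻¹) ^ n :=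
    eventually_atTop.2 ⟨1, fun n hn ↦ by
      obtain ⟨k, rfl⟩ := Nat.exists_eq_add_of_le' hn
      exact QuadraticAdditive.approx_sub_approx_succ_le p hβ.le hhom hf (k + 1)
        (y := 2 ^ k • x) (by rw [smul_smul, pow_succ'])⟩
  have hcauchy := p.cauchy_of_eventually_le_geometric hr hstep
  exact ⟨hcauchy, hcomp _ hcauchy⟩

theorem stmt4 {X Y : Type*} [AddCommGroup X] [AddCommGroup Y] [Module ℝ Y]
    (β : ℝ) (hβ : 0 < β)
    (N : Y → ℝ)
    (hN0 : ∀ y : Y, N y = 0 ↔ y = 0)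
    (htri : ∀ y z : Y, N (y + z) ≤ N y + N z)
    (hhom : ∀ (t : ℝ) (y : Y), N (t • y) = |t| ^ β * N y)
    (hcomp : ∀ u : ℕ → Y,
      (∀ δ > (0 : ℝ), ∃ M : ℕ, ∀ m n, M ≤ m → M ≤ n → N (u m - u n) < δ) →
      ∃ l : Y, ∀ δ > (0 : ℝ), ∃ M : ℕ, ∀ n, M ≤ n → N (u n - l) < δ)
    (ε : ℝ) (hε : 0 ≤ ε)
    (f : X → Y)
    (hf : ∀ x : X, N (f (2 • x) - (3 / 8 : ℝ) • f (4 • x) + (1 / 8 : ℝ) • f (-(4 • x)))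
      ≤ ((2 : ℝ) ^ (β + 2) + (3 : ℝ) ^ (β + 1) + 3) / (8 : ℝ) ^ β * ε)
    (g : ℕ → X → Y)
    (hg : ∀ (n : ℕ) (x : X), g n x =
      (((2 : ℝ) ^ n + 1) / (2 * (4 : ℝ) ^ n)) • f (2 ^ n • x)
        - (((2 : ℝ) ^ n - 1) / (2 * (4 : ℝ) ^ n)) • f (-(2 ^ n • x))) :
    ∀ x : X,
      (∀ δ > (0 : ℝ), ∃ M : ℕ, ∀ m n, M ≤ m → M ≤ n → N (g m x - g n x) < δ) ∧
      (∃ l : Y, ∀ δ > (0 : ℝ), ∃ M : ℕ, ∀ n, M ≤ n → N (g n x - l) < δ) :=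
  stmt4_general β hβ N hN0 htri hhom hcomp ε f hf g hg
end

section
/- Main stability theorem: Let X be an Abelian group with orthogonality relation ⊥ satisfying: x ⊥ y implies x ⊥ -y, -x ⊥ y, 2x ⊥ 2y; and for every x ∈ X there exists y with x ⊥ y and x+y ⊥ x-y. Let Y be a complete β-homogeneous F-space (β > 0) and ε ≥ 0. Suppose f : X → Y satisfies ‖f(x+y) - f(x) - f(y)‖ ≤ ε whenever x ⊥ y. Then there exists g : X → Y such that (a) x ⊥ y implies g(x+y) = g(x) + g(y), and (b) ‖f(x) - g(x)‖ ≤ b·ε for all x ∈ 2X = {2x : x ∈ X}, where b = ((2^(β+2)+3^(β+1)+3)/8^β)·(1 + Σ_{n=2}^∞ (((2^(n-1)+1)/(2·4^(n-1)))^β + ((2^(n-1)-1)/(2·4^(n-1)))^β)). -/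
open Filter

set_option maxHeartbeats 1000000 in
theorem stmt6 {X Y : Type*} [AddCommGroup X] [AddCommGroup Y] [Module ℝ Y]
    (perp : X → X → Prop)
    (hperp1 : ∀ x y, perp x y → perp x (-y) ∧ perp (-x) y ∧ perp (2 • x) (2 • y))
    (hperp2 : ∀ x : X, ∃ y : X, perp x y ∧ perp (x + y) (x - y))
    (β : ℝ) (hβ : 0 < β)
    (N : Y → ℝ)
    (hN0 : ∀ y : Y, N y = 0 ↔ y = 0)
    (htri : ∀ y z : Y, N (y + z) ≤ N y + N z)
    (hhom : ∀ (t : ℝ) (y : Y), N (t • y) = |t| ^ β * N y)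
    (hcomp : ∀ u : ℕ → Y,
      (∀ δ > (0 : ℝ), ∃ M : ℕ, ∀ m n, M ≤ m → M ≤ n → N (u m - u n) < δ) →
      ∃ l : Y, ∀ δ > (0 : ℝ), ∃ M : ℕ, ∀ n, M ≤ n → N (u n - l) < δ)
    (ε : ℝ) (hε : 0 ≤ ε)
    (b : ℝ)
    (hb : b = ((2 : ℝ) ^ (β + 2) + (3 : ℝ) ^ (β + 1) + 3) / (8 : ℝ) ^ β *
      (1 + ∑' k : ℕ,
        ((((2 : ℝ) ^ (k + 1) + 1) / (2 * (4 : ℝ) ^ (k + 1))) ^ β +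
         (((2 : ℝ) ^ (k + 1) - 1) / (2 * (4 : ℝ) ^ (k + 1))) ^ β)))
    (f : X → Y)
    (hf : ∀ x y, perp x y → N (f (x + y) - f x - f y) ≤ ε) :
    ∃ g : X → Y,
      (∀ x y, perp x y → g (x + y) = g x + g y) ∧
      (∀ x : X, N (f (2 • x) - g (2 • x)) ≤ b * ε) := by
  classical
  -- Basic facts about N
  have hNneg : ∀ z : Y, N (-z) = N z := by
    intro z
    have h := hhom (-1) z
    simpa using h
  have hNzero : N 0 = 0 := by
    have h := hhom 0 (0 : Y)
    simpa [Real.zero_rpow hβ.ne'] using h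
  have hNnn : ∀ z : Y, 0 ≤ N z := by
    intro z
    have h := htri z (-z)
    rw [add_neg_cancel, hNzero, hNneg] at h
    linarith
  have htri' : ∀ a c : Y, N (a - c) ≤ N a + N c := by
    intro a c
    have h := htri a (-c)
    rwa [← sub_eq_add_neg, hNneg] at h
  have hsymm : ∀ a c : Y, N (a - c) = N (c - a) := by
    intro a c
    rw [← hNneg (a - c), neg_sub]
  -- geometric ratio
  set r : ℝ := (1/2 : ℝ) ^ β with hr_def
  have hr0 : 0 ≤ r := Real.rpow_nonneg (by norm_num) β
  have hr1 : r < 1 := Real.rpow_lt_one (by norm_num) (by norm_num) hβ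
  -- coefficients
  set al : ℕ → ℝ := fun n => ((2:ℝ)^n + 1)/(2*4^n) with hal
  set ga : ℕ → ℝ := fun n => ((2:ℝ)^n - 1)/(2*4^n) with hga
  have hal0 : ∀ n, 0 ≤ al n := by intro n; simp only [hal]; positivity
  have h2n1 : ∀ n : ℕ, (1:ℝ) ≤ 2^n := fun n => one_le_pow₀ (by norm_num)
  have hga0 : ∀ n, 0 ≤ ga n := by
    intro n; simp only [hga]
    apply div_nonneg _ (by positivity)
    have := h2n1 n; linarith
  set c : ℕ → ℝ := fun n => al n ^ β + ga n ^ β with hc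
  have hc0 : ∀ n, 0 ≤ c n := fun n =>
    add_nonneg (Real.rpow_nonneg (hal0 n) β) (Real.rpow_nonneg (hga0 n) β)
  have hkey : ∀ n : ℕ, ((1/2:ℝ)^n) ^ β = r ^ n := by
    intro n
    rw [← Real.rpow_natCast (1/2:ℝ) n, ← Real.rpow_mul (by norm_num : (0:ℝ) ≤ 1/2),
      mul_comm, Real.rpow_mul (by norm_num : (0:ℝ) ≤ 1/2), Real.rpow_natCast]
  have h4n : ∀ n : ℕ, (4:ℝ)^n = 2^n * 2^n := by
    intro n; rw [show (4:ℝ) = 2*2 by norm_num, mul_pow]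
  have halle : ∀ n, al n ≤ (1/2:ℝ)^n := by
    intro n
    simp only [hal]
    rw [div_le_iff₀ (by positivity), div_pow, one_pow, div_mul_eq_mul_div,
      le_div_iff₀ (by positivity), h4n n]
    have := h2n1 n
    nlinarith [pow_pos (show (0:ℝ) < 2 by norm_num) n]
  have hgale : ∀ n, ga n ≤ (1/2:ℝ)^n := by
    intro n
    refine le_trans ?_ (halle n)
    simp only [hga, hal]
    apply div_le_div_of_nonneg_right ?_ (by positivity)
    · linarith
  have hcle : ∀ n, c n ≤ 2 * r^n := by
    intro n
    have h1 : al n ^ β ≤ r ^ n := by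
      rw [← hkey n]; exact Real.rpow_le_rpow (hal0 n) (halle n) hβ.le
    have h2 : ga n ^ β ≤ r ^ n := by
      rw [← hkey n]; exact Real.rpow_le_rpow (hga0 n) (hgale n) hβ.le
    simp only [hc]; linarith
  -- the constant A and target series S
  set A : ℝ := ((2 : ℝ) ^ (β + 2) + (3 : ℝ) ^ (β + 1) + 3) / (8 : ℝ) ^ β with hA
  have hA0 : 0 ≤ A := by
    rw [hA]
    have h2 : (0:ℝ) < 2 := by norm_num
    have h3 : (0:ℝ) < 3 := by norm_num
    positivity
  set K : ℝ := A * ε with hK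
  have hK0 : 0 ≤ K := mul_nonneg hA0 hε
  have hsum : Summable (fun k : ℕ => c (k+1)) := by
    have h := (summable_geometric_of_lt_one hr0 hr1).mul_left (2*r)
    have h2 : Summable (fun k : ℕ => 2 * r^(k+1)) := h.congr (fun k => by ring)
    exact Summable.of_nonneg_of_le (fun k => hc0 _) (fun k => hcle (k+1)) h2
  set S : ℝ := ∑' k : ℕ, c (k+1) with hS
  have hS0 : 0 ≤ S := tsum_nonneg (fun k => hc0 _)
  have hc0eq : c 0 = 1 := by
    simp only [hc, hal, hga]
    norm_num [Real.one_rpow, Real.zero_rpow hβ.ne']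
  have hpart : ∀ n : ℕ, ∑ j ∈ Finset.range n, c j ≤ 1 + S := by
    intro n
    cases n with
    | zero => simpa using by linarith
    | succ m =>
        rw [Finset.sum_range_succ']
        have h1 : ∑ i ∈ Finset.range m, c (i+1) ≤ S :=
          Summable.sum_le_tsum _ (fun i _ => hc0 _) hsum
        rw [hc0eq]
        linarith
  -- iterates
  set w : X → ℕ → X := fun v n => 2^n • v with hw
  set uu : X → ℕ → Y := fun v n => al n • f (w v n) - ga n • f (-(w v n)) with huu
  have hwsucc : ∀ v n, w v (n+1) = 2 • w v n := by
    intro v n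
    simp only [hw]
    rw [pow_succ', mul_smul]
  have hw2 : ∀ (x : X) n, w (2 • x) n = 2 • w x n := by
    intro x n
    simp only [hw]
    rw [smul_smul, smul_smul, mul_comm]
  have huu0 : ∀ v, uu v 0 = f v := by
    intro v
    simp only [huu, hw, pow_zero, one_smul, hal, hga]
    norm_num
  set Dx : X → Y := fun t => (3/8:ℝ) • f (2•t) - (1/8:ℝ) • f (-(2•t)) - f t with hDx
  have halrec : ∀ n, al (n+1) = 3/8 * al n + 1/8 * ga n := by
    intro n
    simp only [hal, hga]
    rw [pow_succ, pow_succ]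
    have h2 : (0:ℝ) < 2^n := by positivity
    have h4 : (0:ℝ) < 4^n := by positivity
    field_simp
    ring
  have hgarec : ∀ n, ga (n+1) = 1/8 * al n + 3/8 * ga n := by
    intro n
    simp only [hal, hga]
    rw [pow_succ, pow_succ]
    have h2 : (0:ℝ) < 2^n := by positivity
    have h4 : (0:ℝ) < 4^n := by positivity
    field_simp
    ring
  have hdiff : ∀ v n, uu v (n+1) - uu v n = al n • Dx (w v n) - ga n • Dx (-(w v n)) := by
    intro v n
    simp only [huu, hDx]
    rw [hwsucc v n, halrec n, hgarec n, show (2:ℕ) • -(w v n) = -((2:ℕ) • w v n) from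
      smul_neg 2 (w v n), neg_neg]
    module
  -- THE core analytic estimate
  have hDbound : ∀ s : X, N (Dx (2 • s)) ≤ K := by
    intro x
    obtain ⟨y, hxy, hsxy⟩ := hperp2 x
    have p2 : perp (x+y) (-(x-y)) := (hperp1 _ _ hsxy).1
    have p3 : perp (-(x+y)) (x-y) := (hperp1 _ _ hsxy).2.1
    have p4 : perp (-(x+y)) (-(x-y)) := (hperp1 _ _ p3).1
    have q : perp (2•x) (2•y) := (hperp1 _ _ hxy).2.2
    have q2 : perp (2•x) (-(2•y)) := (hperp1 _ _ q).1
    have q3 : perp (-(2•x)) (2•y) := (hperp1 _ _ q).2.1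
    have q4 : perp (-(2•x)) (-(2•y)) := (hperp1 _ _ q3).1
    have qs : perp (2•x + 2•y) (2•x - 2•y) := by
      have h := (hperp1 _ _ hsxy).2.2
      rwa [smul_add, smul_sub] at h
    have qs3 : perp (-(2•x + 2•y)) (2•x - 2•y) := (hperp1 _ _ qs).2.1
    have qs4 : perp (-(2•x + 2•y)) (-(2•x - 2•y)) := (hperp1 _ _ qs3).1
    -- level 2 relations
    have h1 := hf _ _ q
    have h2 := hf _ _ q2
    rw [show (2•x : X) + -(2•y) = 2•x - 2•y from (sub_eq_add_neg _ _).symm] at h2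
    have h3 := hf _ _ qs
    rw [show ((2•x : X) + 2•y) + (2•x - 2•y) = 2•(2•x) from by abel] at h3
    have k1 := hf _ _ q4
    rw [show (-(2•x) : X) + -(2•y) = -(2•x + 2•y) from by abel] at k1
    have k2 := hf _ _ q3
    rw [show (-(2•x) : X) + 2•y = -(2•x - 2•y) from by abel] at k2
    have k3 := hf _ _ qs4
    rw [show (-((2•x : X) + 2•y)) + -(2•x - 2•y) = -(2•(2•x)) from by abel] at k3
    -- level 1 relations
    have r1 := hf _ _ p2
    rw [show ((x : X) + y) + -(x-y) = 2•y from by abel] at r1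
    have r2 := hf _ _ hsxy
    rw [show ((x : X) + y) + (x-y) = 2•x from by abel] at r2
    have r3 := hf _ _ p3
    rw [show (-((x : X)+y)) + (x-y) = -(2•y) from by abel] at r3
    have r4 := hf _ _ p4
    rw [show (-((x : X)+y)) + -(x-y) = -(2•x) from by abel] at r4
    -- assemble P1
    have NP1 : N (f (2•(2•x)) - (f (2•x) + f (2•x)) - f (2•y) - f (-(2•y))) ≤ ε + (ε + ε) := by
      have e : f (2•(2•x)) - (f (2•x) + f (2•x)) - f (2•y) - f (-(2•y)) =
          (f (2•(2•x)) - f (2•x + 2•y) - f (2•x - 2•y)) +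
          ((f (2•x + 2•y) - f (2•x) - f (2•y)) + (f (2•x - 2•y) - f (2•x) - f (-(2•y)))) := by
        abel
      rw [e]
      exact le_trans (htri _ _) (add_le_add h3 (le_trans (htri _ _) (add_le_add h1 h2)))
    have NP2 : N (f (-(2•(2•x))) - (f (-(2•x)) + f (-(2•x))) - f (-(2•y)) - f (2•y)) ≤
        ε + (ε + ε) := by
      have e : f (-(2•(2•x))) - (f (-(2•x)) + f (-(2•x))) - f (-(2•y)) - f (2•y) =
          (f (-(2•(2•x))) - f (-(2•x + 2•y)) - f (-(2•x - 2•y))) +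
          ((f (-(2•x + 2•y)) - f (-(2•x)) - f (-(2•y))) +
           (f (-(2•x - 2•y)) - f (-(2•x)) - f (2•y))) := by
        abel
      rw [e]
      exact le_trans (htri _ _) (add_le_add k3 (le_trans (htri _ _) (add_le_add k1 k2)))
    have NR : N (f (2•y) - f (2•x) + (f (-(2•y)) - f (-(2•x)))) ≤ (ε + ε) + (ε + ε) := by
      have e : f (2•y) - f (2•x) + (f (-(2•y)) - f (-(2•x))) =
          ((f (2•y) - f (x+y) - f (-(x-y))) - (f (2•x) - f (x+y) - f (x-y))) +
          ((f (-(2•y)) - f (-(x+y)) - f (x-y)) - (f (-(2•x)) - f (-(x+y)) - f (-(x-y)))) := by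
        abel
      rw [e]
      refine le_trans (htri _ _) (add_le_add ?_ ?_)
      · exact le_trans (htri' _ _) (add_le_add r1 r2)
      · exact le_trans (htri' _ _) (add_le_add r3 r4)
    -- combine
    have hT : (3:ℝ) • f (2•(2•x)) - f (-(2•(2•x))) - (8:ℝ) • f (2•x) =
        (3:ℝ) • (f (2•(2•x)) - (f (2•x) + f (2•x)) - f (2•y) - f (-(2•y)))
        - (f (-(2•(2•x))) - (f (-(2•x)) + f (-(2•x))) - f (-(2•y)) - f (2•y))
        + (2:ℝ) • (f (2•y) - f (2•x) + (f (-(2•y)) - f (-(2•x)))) := by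
      module
    have NT : N ((3:ℝ) • f (2•(2•x)) - f (-(2•(2•x))) - (8:ℝ) • f (2•x)) ≤
        (3:ℝ)^β * (ε + (ε + ε)) + (ε + (ε + ε)) + (2:ℝ)^β * ((ε + ε) + (ε + ε)) := by
      rw [hT]
      refine le_trans (htri _ _) (add_le_add (le_trans (htri' _ _) (add_le_add ?_ ?_)) ?_)
      · rw [hhom, show |(3:ℝ)| = 3 by norm_num]
        exact mul_le_mul_of_nonneg_left NP1 (Real.rpow_nonneg (by norm_num) β)
      · exact NP2
      · rw [hhom, show |(2:ℝ)| = 2 by norm_num]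
        exact mul_le_mul_of_nonneg_left NR (Real.rpow_nonneg (by norm_num) β)
    have hD8 : Dx (2•x) = (1/8:ℝ) •
        ((3:ℝ) • f (2•(2•x)) - f (-(2•(2•x))) - (8:ℝ) • f (2•x)) := by
      simp only [hDx]
      module
    rw [hD8, hhom, show |(1/8:ℝ)| = 1/8 by norm_num]
    calc (1/8:ℝ)^β * N ((3:ℝ) • f (2•(2•x)) - f (-(2•(2•x))) - (8:ℝ) • f (2•x))
        ≤ (1/8:ℝ)^β * ((3:ℝ)^β * (ε + (ε + ε)) + (ε + (ε + ε)) + (2:ℝ)^β * ((ε + ε) + (ε + ε))) :=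
          mul_le_mul_of_nonneg_left NT (Real.rpow_nonneg (by norm_num) β)
      _ = K := by
          rw [hK, hA, one_div, Real.inv_rpow (by norm_num : (0:ℝ) ≤ 8),
            Real.rpow_add_one (by norm_num : (3:ℝ) ≠ 0),
            show (2:ℝ)^(β+2) = 2^β*4 by
              rw [Real.rpow_add (by norm_num : (0:ℝ) < 2)]; norm_num]
          ring
  -- step bounds
  have hcore : ∀ (v : X) (n : ℕ) (s : X), w v n = 2 • s →
      N (uu v (n+1) - uu v n) ≤ c n * K := by
    intro v n s hws
    rw [hdiff v n, hws]
    have b1 : N (al n • Dx (2 • s)) ≤ al n ^ β * K := by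
      rw [hhom, abs_of_nonneg (hal0 n)]
      exact mul_le_mul_of_nonneg_left (hDbound s) (Real.rpow_nonneg (hal0 n) β)
    have b2 : N (ga n • Dx (-(2 • s))) ≤ ga n ^ β * K := by
      rw [show (-(2 • s) : X) = 2 • (-s) from (smul_neg 2 s).symm, hhom,
        abs_of_nonneg (hga0 n)]
      exact mul_le_mul_of_nonneg_left (hDbound (-s)) (Real.rpow_nonneg (hga0 n) β)
    calc N (al n • Dx (2 • s) - ga n • Dx (-(2 • s)))
        ≤ N (al n • Dx (2 • s)) + N (ga n • Dx (-(2 • s))) := htri' _ _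
      _ ≤ al n ^ β * K + ga n ^ β * K := add_le_add b1 b2
      _ = c n * K := by simp only [hc]; ring
  have hstep2X : ∀ (x : X) (n : ℕ), N (uu (2•x) (n+1) - uu (2•x) n) ≤ c n * K :=
    fun x n => hcore _ n (2^n • x) (hw2 x n)
  have hstepAll : ∀ (v : X) (n : ℕ), N (uu v (n+1+1) - uu v (n+1)) ≤ c (n+1) * K :=
    fun v n => hcore v (n+1) (w v n) (hwsucc v n)
  -- telescoping from 0 (on 2X)
  have hchain0 : ∀ (x : X) (n : ℕ),
      N (uu (2•x) n - f (2•x)) ≤ (∑ j ∈ Finset.range n, c j) * K := by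
    intro x n
    induction n with
    | zero => simp [huu0, hNzero]
    | succ n ih =>
        have hdec : uu (2•x) (n+1) - f (2•x) =
            (uu (2•x) (n+1) - uu (2•x) n) + (uu (2•x) n - f (2•x)) := by abel
        calc N (uu (2•x) (n+1) - f (2•x))
            ≤ N (uu (2•x) (n+1) - uu (2•x) n) + N (uu (2•x) n - f (2•x)) := by
              rw [hdec]; exact htri _ _
          _ ≤ c n * K + (∑ j ∈ Finset.range n, c j) * K := add_le_add (hstep2X x n) ih
          _ = (∑ j ∈ Finset.range (n+1), c j) * K := by
              rw [Finset.sum_range_succ]; ring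
  -- Cauchy bound
  have hgeo : ∀ m : ℕ, ∑ j ∈ Finset.range m, r^j ≤ (1-r)⁻¹ := by
    intro m
    have h1 := Summable.sum_le_tsum (Finset.range m) (fun i (_ : i ∉ Finset.range m) => pow_nonneg hr0 i)
      (summable_geometric_of_lt_one hr0 hr1)
    rwa [tsum_geometric_of_lt_one hr0 hr1] at h1
  set Cc : ℝ := 2 * (1-r)⁻¹ * K with hCc
  have hCc0 : 0 ≤ Cc := by
    have : 0 < 1 - r := by linarith
    have h2 : 0 ≤ (1-r)⁻¹ := by positivity
    rw [hCc]; positivity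
  have hCb : ∀ (v : X) (n m : ℕ), N (uu v (n+1+m) - uu v (n+1)) ≤ Cc * r^(n+1) := by
    intro v n m
    have hchain : N (uu v (n+1+m) - uu v (n+1)) ≤ ∑ j ∈ Finset.range m, (c (n+1+j) * K) := by
      induction m with
      | zero => simp [hNzero]
      | succ m ih =>
          have e1 : n+1+(m+1) = (n+m)+1+1 := by omega
          have hdec : uu v (n+1+(m+1)) - uu v (n+1) =
              (uu v ((n+m)+1+1) - uu v ((n+m)+1)) + (uu v (n+1+m) - uu v (n+1)) := by
            rw [e1, show n+1+m = (n+m)+1 by omega]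
            abel
          calc N (uu v (n+1+(m+1)) - uu v (n+1))
              ≤ N (uu v ((n+m)+1+1) - uu v ((n+m)+1)) + N (uu v (n+1+m) - uu v (n+1)) := by
                rw [hdec]; exact htri _ _
            _ ≤ c ((n+m)+1) * K + ∑ j ∈ Finset.range m, (c (n+1+j) * K) :=
                add_le_add (hstepAll v (n+m)) ih
            _ = ∑ j ∈ Finset.range (m+1), (c (n+1+j) * K) := by
                rw [Finset.sum_range_succ, show n+1+m = (n+m)+1 by omega]; ring
    refine le_trans hchain ?_
    have hterm : ∀ j, c (n+1+j) * K ≤ (2 * r^(n+1) * K) * r^j := by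
      intro j
      have h1 : c (n+1+j) ≤ 2 * r^(n+1) * r^j := by
        have := hcle (n+1+j)
        rwa [pow_add, ← mul_assoc] at this
      exact le_trans (mul_le_mul_of_nonneg_right h1 hK0) (le_of_eq (by ring))
    calc ∑ j ∈ Finset.range m, (c (n+1+j) * K)
        ≤ ∑ j ∈ Finset.range m, ((2 * r^(n+1) * K) * r^j) :=
          Finset.sum_le_sum (fun j _ => hterm j)
      _ = (2 * r^(n+1) * K) * ∑ j ∈ Finset.range m, r^j := by rw [Finset.mul_sum]
      _ ≤ (2 * r^(n+1) * K) * (1-r)⁻¹ := by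
          apply mul_le_mul_of_nonneg_left (hgeo m)
          positivity
      _ = Cc * r^(n+1) := by rw [hCc]; ring
  -- the sequences are Cauchy
  have hcauchy : ∀ v : X, ∀ δ > (0:ℝ), ∃ M : ℕ, ∀ m n, M ≤ m → M ≤ n →
      N (uu v m - uu v n) < δ := by
    intro v δ hδ
    have hlim : Tendsto (fun n : ℕ => Cc * r^n) atTop (nhds 0) := by
      have h := (tendsto_pow_atTop_nhds_zero_of_lt_one hr0 hr1).const_mul Cc
      simpa using h
    obtain ⟨n₀, hn₀⟩ := (hlim.eventually_lt_const hδ).exists_forall_of_atTop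
    refine ⟨n₀ + 1, ?_⟩
    have key : ∀ m n, n₀ + 1 ≤ n → n ≤ m → N (uu v m - uu v n) < δ := by
      intro m n hn hnm
      obtain ⟨k, rfl⟩ := Nat.exists_eq_add_of_le hnm
      obtain ⟨j, hj⟩ := Nat.exists_eq_add_of_le hn
      have e : n = (n₀ + j) + 1 := by omega
      have h1 : N (uu v (n + k) - uu v n) ≤ Cc * r^n := by
        rw [e]
        exact hCb v (n₀ + j) k
      have h2 : Cc * r^n ≤ Cc * r^(n₀+1) :=
        mul_le_mul_of_nonneg_left (pow_le_pow_of_le_one hr0 hr1.le (by omega)) hCc0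
      exact lt_of_le_of_lt (le_trans h1 h2) (hn₀ (n₀+1) (by omega))
    intro m n hm hn
    rcases le_total n m with h | h
    · exact key m n hn h
    · rw [hsymm]; exact key n m hm h
  -- limit function
  choose g hg using fun v => hcomp (uu v) (hcauchy v)
  refine ⟨g, ?_, ?_⟩
  · -- orthogonal additivity
    intro x y hxy
    have hpn : ∀ n, perp (w x n) (w y n) := by
      intro n
      induction n with
      | zero => simpa [hw] using hxy
      | succ n ih =>
          rw [hwsucc, hwsucc]
          exact (hperp1 _ _ ih).2.2
    have hquant : ∀ n, N (uu (x+y) n - (uu x n + uu y n)) ≤ c n * ε := by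
      intro n
      have hwadd : w (x+y) n = w x n + w y n := by simp only [hw]; rw [smul_add]
      have hid : uu (x+y) n - (uu x n + uu y n) =
          al n • (f (w x n + w y n) - f (w x n) - f (w y n))
          - ga n • (f (-(w x n) + -(w y n)) - f (-(w x n)) - f (-(w y n))) := by
        simp only [huu]
        rw [hwadd, show (-(w x n + w y n) : X) = -(w x n) + -(w y n) from by abel]
        module
      have hperp_neg : perp (-(w x n)) (-(w y n)) := (hperp1 _ _ ((hperp1 _ _ (hpn n)).2.1)).1
      have b1 : N (al n • (f (w x n + w y n) - f (w x n) - f (w y n))) ≤ al n ^ β * ε := by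
        rw [hhom, abs_of_nonneg (hal0 n)]
        exact mul_le_mul_of_nonneg_left (hf _ _ (hpn n)) (Real.rpow_nonneg (hal0 n) β)
      have b2 : N (ga n • (f (-(w x n) + -(w y n)) - f (-(w x n)) - f (-(w y n)))) ≤
          ga n ^ β * ε := by
        rw [hhom, abs_of_nonneg (hga0 n)]
        exact mul_le_mul_of_nonneg_left (hf _ _ hperp_neg) (Real.rpow_nonneg (hga0 n) β)
      rw [hid]
      calc N (al n • (f (w x n + w y n) - f (w x n) - f (w y n))
            - ga n • (f (-(w x n) + -(w y n)) - f (-(w x n)) - f (-(w y n))))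
          ≤ _ + _ := htri' _ _
        _ ≤ al n ^ β * ε + ga n ^ β * ε := add_le_add b1 b2
        _ = c n * ε := by simp only [hc]; ring
    have main : ∀ δ > (0:ℝ), N (g (x+y) - (g x + g y)) < δ := by
      intro δ hδ
      obtain ⟨M₁, hM₁⟩ := hg (x+y) (δ/4) (by linarith)
      obtain ⟨M₂, hM₂⟩ := hg x (δ/4) (by linarith)
      obtain ⟨M₃, hM₃⟩ := hg y (δ/4) (by linarith)
      have hlim : Tendsto (fun n : ℕ => 2 * r^n * ε) atTop (nhds 0) := by
        have h := ((tendsto_pow_atTop_nhds_zero_of_lt_one hr0 hr1).const_mul 2).mul_const ε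
        simpa using h
      obtain ⟨M₄, hM₄⟩ := (hlim.eventually_lt_const (show (0:ℝ) < δ/4 by linarith)).exists_forall_of_atTop
      obtain ⟨n, hn1, hn2, hn3, hn4⟩ : ∃ n, M₁ ≤ n ∧ M₂ ≤ n ∧ M₃ ≤ n ∧ M₄ ≤ n :=
        ⟨max (max M₁ M₂) (max M₃ M₄), by omega, by omega, by omega, by omega⟩
      have hquant' : N (uu (x+y) n - (uu x n + uu y n)) < δ/4 := by
        refine lt_of_le_of_lt (le_trans (hquant n) ?_) (hM₄ n hn4)
        exact mul_le_mul_of_nonneg_right (hcle n) hε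
      have hdec : g (x+y) - (g x + g y) =
          (-(uu (x+y) n - g (x+y)) + (uu (x+y) n - (uu x n + uu y n)))
          + ((uu x n - g x) + (uu y n - g y)) := by abel
      have h1 := hM₁ n hn1
      have h2 := hM₂ n hn2
      have h3 := hM₃ n hn3
      calc N (g (x+y) - (g x + g y))
          ≤ N (-(uu (x+y) n - g (x+y)) + (uu (x+y) n - (uu x n + uu y n)))
            + N ((uu x n - g x) + (uu y n - g y)) := by rw [hdec]; exact htri _ _
        _ ≤ (N (-(uu (x+y) n - g (x+y))) + N (uu (x+y) n - (uu x n + uu y n)))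
            + (N (uu x n - g x) + N (uu y n - g y)) :=
            add_le_add (htri _ _) (htri _ _)
        _ = (N (uu (x+y) n - g (x+y)) + N (uu (x+y) n - (uu x n + uu y n)))
            + (N (uu x n - g x) + N (uu y n - g y)) := by rw [hNneg]
        _ < (δ/4 + δ/4) + (δ/4 + δ/4) := by
            apply add_lt_add (add_lt_add h1 hquant') (add_lt_add h2 h3)
        _ = δ := by ring
    have hzero : N (g (x+y) - (g x + g y)) = 0 := by
      by_contra hne
      have hpos : 0 < N (g (x+y) - (g x + g y)) :=
        lt_of_le_of_ne (hNnn _) (Ne.symm hne)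
      exact absurd (main _ hpos) (lt_irrefl _)
    have := (hN0 _).mp hzero
    exact sub_eq_zero.mp this
  · -- the bound on 2X
    intro x
    refine le_of_forall_pos_le_add ?_
    intro δ hδ
    obtain ⟨M, hM⟩ := hg (2•x) δ hδ
    have hub : N (uu (2•x) M - f (2•x)) ≤ (1+S) * K :=
      le_trans (hchain0 x M) (mul_le_mul_of_nonneg_right (hpart M) hK0)
    have hbeq : b = A * (1 + S) := by
      rw [hb, hS]
    calc N (f (2•x) - g (2•x))
        ≤ N (f (2•x) - uu (2•x) M) + N (uu (2•x) M - g (2•x)) := by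
          rw [show f (2•x) - g (2•x) =
            (f (2•x) - uu (2•x) M) + (uu (2•x) M - g (2•x)) from by abel]
          exact htri _ _
      _ ≤ (1+S) * K + δ := by
          refine add_le_add ?_ (le_of_lt (hM M le_rfl))
          rw [hsymm]; exact hub
      _ = b * ε + δ := by rw [hbeq, hK]; ring
end

section
/- Uniqueness in the stability theorem: Under the hypotheses of the main stability theorem (X an Abelian group with the orthogonality relation, Y a complete β-homogeneous F-space, f with orthogonal ε-additivity), if g, g' : X → Y are both orthogonally additive and satisfy ‖f(x) - g(x)‖ ≤ b·ε and ‖f(x) - g'(x)‖ ≤ b·ε for all x ∈ 2X, then g(x) = g'(x) for all x ∈ 2X. -/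
theorem stmt7 {X Y : Type*} [AddCommGroup X] [AddCommGroup Y] [Module ℝ Y]
    (perp : X → X → Prop)
    (hperp1 : ∀ x y, perp x y → perp x (-y) ∧ perp (-x) y ∧ perp (2 • x) (2 • y))
    (hperp2 : ∀ x : X, ∃ y : X, perp x y ∧ perp (x + y) (x - y))
    (β : ℝ) (hβ : 0 < β)
    (N : Y → ℝ)
    (hN0 : ∀ y : Y, N y = 0 ↔ y = 0)
    (htri : ∀ y z : Y, N (y + z) ≤ N y + N z)
    (hhom : ∀ (t : ℝ) (y : Y), N (t • y) = |t| ^ β * N y)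
    (ε : ℝ) (hε : 0 ≤ ε)
    (b : ℝ)
    (hb : b = ((2 : ℝ) ^ (β + 2) + (3 : ℝ) ^ (β + 1) + 3) / (8 : ℝ) ^ β *
      (1 + ∑' k : ℕ,
        ((((2 : ℝ) ^ (k + 1) + 1) / (2 * (4 : ℝ) ^ (k + 1))) ^ β +
         (((2 : ℝ) ^ (k + 1) - 1) / (2 * (4 : ℝ) ^ (k + 1))) ^ β)))
    (f g g' : X → Y)
    (hf : ∀ x y, perp x y → N (f (x + y) - f x - f y) ≤ ε)
    (hgadd : ∀ x y, perp x y → g (x + y) = g x + g y)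
    (hg'add : ∀ x y, perp x y → g' (x + y) = g' x + g' y)
    (hgb : ∀ x : X, N (f (2 • x) - g (2 • x)) ≤ b * ε)
    (hg'b : ∀ x : X, N (f (2 • x) - g' (2 • x)) ≤ b * ε) :
    ∀ x : X, g (2 • x) = g' (2 • x) := by
  have hN0' : N 0 = 0 := (hN0 0).mpr rfl
  intro x
  set h : X → Y := fun z => g z - g' z with hh
  have hadd : ∀ u v, perp u v → h (u + v) = h u + h v := by
    intro u v huv
    simp only [hh]
    rw [hgadd u v huv, hg'add u v huv]; abel
  have Nneg : ∀ v : Y, N (-v) = N v := by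
    intro v
    rw [← neg_one_smul ℝ v, hhom]
    simp [Real.one_rpow]
  have Npos : ∀ v : Y, 0 ≤ N v := by
    intro v
    have h1 := htri v (-v)
    rw [add_neg_cancel, hN0', Nneg] at h1
    linarith
  have Nh2 : ∀ z : X, N (h (z + z)) ≤ b * ε + b * ε := by
    intro z
    have e : h (z + z) = -(f (2 • z) - g (2 • z)) + (f (2 • z) - g' (2 • z)) := by
      rw [← two_nsmul z]; simp only [hh]; abel
    rw [e]
    refine le_trans (htri _ _) ?_
    rw [Nneg]; exact add_le_add (hgb z) (hg'b z)
  have basic : ∀ u v : X, perp u v → perp (u + v) (u - v) →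
      h (u + u) = h u + h u + (h v + h (-v)) ∧
      h (-(u + u)) = h (-u) + h (-u) + (h v + h (-v)) ∧
      h (v + v) = h u + h (-u) + (h v + h v) ∧
      h (-(v + v)) = h u + h (-u) + (h (-v) + h (-v)) := by
    intro u v p1 q1
    have p2 : perp u (-v) := (hperp1 u v p1).1
    have p3 : perp (-u) v := (hperp1 u v p1).2.1
    have p4 : perp (-u) (-v) := (hperp1 u (-v) p2).2.1
    have q2 : perp (u + v) (-(u - v)) := (hperp1 _ _ q1).1
    have q3 : perp (-(u + v)) (u - v) := (hperp1 _ _ q1).2.1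
    have q4 : perp (-(u + v)) (-(u - v)) := (hperp1 _ _ q2).2.1
    have e1 : h (u + v) = h u + h v := hadd u v p1
    have e2 : h (u - v) = h u + h (-v) := by
      have := hadd u (-v) p2; rwa [← sub_eq_add_neg] at this
    have e3 : h (-u + v) = h (-u) + h v := hadd _ _ p3
    have e4 : h (-u + -v) = h (-u) + h (-v) := hadd _ _ p4
    refine ⟨?_, ?_, ?_, ?_⟩
    · have f1 := hadd _ _ q1
      rw [show (u + v) + (u - v) = u + u from by abel] at f1
      rw [f1, e1, e2]; abel
    · have f4 := hadd _ _ q4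
      rw [show -(u + v) + -(u - v) = -(u + u) from by abel] at f4
      rw [f4, show -(u + v) = -u + -v from by abel,
          show -(u - v) = -u + v from by abel, e4, e3]; abel
    · have f2 := hadd _ _ q2
      rw [show (u + v) + -(u - v) = v + v from by abel] at f2
      rw [f2, e1, show -(u - v) = -u + v from by abel, e3]; abel
    · have f3 := hadd _ _ q3
      rw [show -(u + v) + (u - v) = -(v + v) from by abel] at f3
      rw [f3, show -(u + v) = -u + -v from by abel, e4, e2]; abel
  have stepO : ∀ u : X, h (u + u) - h (-(u + u)) = (2 : ℝ) • (h u - h (-u)) := by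
    intro u
    obtain ⟨y, p1, q1⟩ := hperp2 u
    obtain ⟨c1, c2, -, -⟩ := basic u y p1 q1
    rw [c1, c2, two_smul]; abel
  have stepE : ∀ u : X,
      h ((u + u) + (u + u)) + h (-((u + u) + (u + u))) =
        (4 : ℝ) • (h (u + u) + h (-(u + u))) := by
    intro u
    obtain ⟨y, p1, q1⟩ := hperp2 u
    obtain ⟨c1, c2, c3, c4⟩ := basic u y p1 q1
    have pA : perp (u + u) (y + y) := by
      have := (hperp1 u y p1).2.2; rwa [two_nsmul, two_nsmul] at this
    have qA : perp ((u + u) + (y + y)) ((u + u) - (y + y)) := by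
      have := (hperp1 (u + y) (u - y) q1).2.2
      rwa [two_nsmul, two_nsmul, show (u + y) + (u + y) = (u + u) + (y + y) from by abel,
        show (u - y) + (u - y) = (u + u) - (y + y) from by abel] at this
    obtain ⟨d1, d2, -, -⟩ := basic (u + u) (y + y) pA qA
    have h4 : ∀ w : Y, (4 : ℝ) • w = w + w + (w + w) := by
      intro w
      rw [show (4 : ℝ) = 2 + 2 from by norm_num, add_smul, two_smul]
    rw [d1, d2, c1, c2, c3, c4, h4]; abel
  -- the doubling sequence
  let s : ℕ → X := fun n => Nat.rec x (fun _ u => u + u) n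
  have hs : ∀ n, s (n + 1) = s n + s n := fun _ => rfl
  have hs1 : s 1 = x + x := rfl
  have hscale : ∀ (r : ℝ), 0 < r → ∀ (v : Y) (n : ℕ),
      N ((r ^ n) • v) = (r ^ β) ^ n * N v := by
    intro r hr v n
    induction n with
    | zero => simp
    | succ n ih =>
      rw [pow_succ', mul_smul, hhom, abs_of_pos hr, ih, pow_succ]; ring
  have hD : ∀ n : ℕ, h (s n + s n) + h (-(s n + s n)) =
      ((4 : ℝ) ^ n) • (h (x + x) + h (-(x + x))) := by
    intro n
    induction n with
    | zero => simp [s]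
    | succ n ih =>
      rw [hs, stepE (s n), ih, smul_smul, ← pow_succ']
  have hO : ∀ n : ℕ, h (s (n + 1)) - h (-(s (n + 1))) =
      ((2 : ℝ) ^ n) • (h (x + x) - h (-(x + x))) := by
    intro n
    induction n with
    | zero => rw [pow_zero, one_smul]; rfl
    | succ n ih =>
      rw [hs (n + 1), stepO (s (n + 1)), ih, smul_smul, ← pow_succ']
  have bD : ∀ n : ℕ, N (h (s n + s n) + h (-(s n + s n))) ≤
      (b * ε + b * ε) + (b * ε + b * ε) := by
    intro n
    refine le_trans (htri _ _) (add_le_add (Nh2 _) ?_)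
    rw [show -(s n + s n) = (-(s n)) + (-(s n)) from by abel]
    exact Nh2 _
  have bO : ∀ n : ℕ, N (h (s (n + 1)) - h (-(s (n + 1)))) ≤
      (b * ε + b * ε) + (b * ε + b * ε) := by
    intro n
    rw [sub_eq_add_neg]
    refine le_trans (htri _ _) ?_
    rw [Nneg]
    refine add_le_add ?_ ?_
    · rw [hs]; exact Nh2 _
    · rw [hs, show -(s n + s n) = -(s n) + -(s n) from by abel]
      exact Nh2 _
  have kill : ∀ (C r : ℝ), 1 < r → ∀ a : ℝ, 0 ≤ a →
      (∀ n : ℕ, r ^ n * a ≤ C) → a = 0 := by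
    intro C r hr a ha hle
    by_contra hne
    have ha' : 0 < a := lt_of_le_of_ne ha (Ne.symm hne)
    obtain ⟨n, hn⟩ := pow_unbounded_of_one_lt (C / a) hr
    have h1 := (div_lt_iff₀ ha').mp hn
    linarith [hle n]
  have r2 : (1 : ℝ) < (2 : ℝ) ^ β := by
    rw [Real.one_lt_rpow_iff_of_pos (by norm_num)]
    exact Or.inl ⟨by norm_num, hβ⟩
  have r4 : (1 : ℝ) < (4 : ℝ) ^ β := by
    rw [Real.one_lt_rpow_iff_of_pos (by norm_num)]
    exact Or.inl ⟨by norm_num, hβ⟩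
  have hDx : h (x + x) + h (-(x + x)) = 0 := by
    apply (hN0 _).mp
    refine kill ((b * ε + b * ε) + (b * ε + b * ε)) _ r4 _ (Npos _) ?_
    intro n
    have hb' := bD n
    rw [hD n, hscale 4 (by norm_num)] at hb'
    exact hb'
  have hOx : h (x + x) - h (-(x + x)) = 0 := by
    apply (hN0 _).mp
    refine kill ((b * ε + b * ε) + (b * ε + b * ε)) _ r2 _ (Npos _) ?_
    intro n
    have hb' := bO n
    rw [hO n, hscale 2 (by norm_num)] at hb'
    exact hb'
  have heq : h (x + x) = h (-(x + x)) := sub_eq_zero.mp hOx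
  rw [← heq] at hDx
  have h3 : (2 : ℝ) • h (x + x) = 0 := by rw [two_smul]; exact hDx
  have h4 := hhom 2 (h (x + x))
  rw [h3, hN0'] at h4
  have h5 : N (h (x + x)) = 0 := by
    rcases mul_eq_zero.mp h4.symm with h | h
    · exact absurd h (ne_of_gt (Real.rpow_pos_of_pos (by norm_num) β))
    · exact h
  have hxx : h (x + x) = 0 := (hN0 _).mp h5
  simp only [hh] at hxx
  rw [two_nsmul]
  exact sub_eq_zero.mp hxx
end

section
/- If g : X → Y is orthogonally additive (g(x+y) = g(x)+g(y) whenever x ⊥ y), where X is an Abelian group with a relation ⊥ satisfying: x ⊥ y implies x ⊥ -y, -x ⊥ y, 2x ⊥ 2y; and every x admits y with x ⊥ y and x+y ⊥ x-y, and Y is a real vector space, then for all n ≥ 1 and x ∈ X: g(2x) = ((2^n+1)/(2·4^n))·g(2^(n+1) x) - ((2^n-1)/(2·4^n))·g(-2^(n+1) x). -/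
theorem stmt8 {X Y : Type*} [AddCommGroup X] [AddCommGroup Y] [Module ℝ Y]
    (perp : X → X → Prop)
    (hperp1 : ∀ x y, perp x y → perp x (-y) ∧ perp (-x) y ∧ perp (2 • x) (2 • y))
    (hperp2 : ∀ x : X, ∃ y : X, perp x y ∧ perp (x + y) (x - y))
    (g : X → Y)
    (hgadd : ∀ x y, perp x y → g (x + y) = g x + g y) :
    ∀ n : ℕ, 1 ≤ n → ∀ x : X,
      g (2 • x) = (((2 : ℝ) ^ n + 1) / (2 * (4 : ℝ) ^ n)) • g (2 ^ (n + 1) • x)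
        - (((2 : ℝ) ^ n - 1) / (2 * (4 : ℝ) ^ n)) • g (-(2 ^ (n + 1) • x)) := by
  have E : ∀ a b : X, perp a b → ∀ c : X, a + b = c → g c = g a + g b := by
    intro a b h c hc
    rw [← hc]; exact hgadd a b h
  have key : ∀ t : X,
      g (4 • t) = g (2 • t) + g (2 • t) + g (2 • t) + g (-(2 • t)) ∧
      g (-(4 • t)) = g (2 • t) + (g (-(2 • t)) + g (-(2 • t)) + g (-(2 • t))) := by
    intro t
    obtain ⟨y, hxy, hsd⟩ := hperp2 t
    have h1 := hperp1 t y hxy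
    have hty' : perp t (-y) := h1.1
    have hnt : perp (-t) y := h1.2.1
    have h2 : perp (2 • t) (2 • y) := h1.2.2
    have hntny : perp (-t) (-y) := (hperp1 _ _ hnt).1
    have h2' : perp (2 • t) (-(2 • y)) := by
      have := (hperp1 _ _ hty').2.2
      simpa [smul_neg] using this
    have h2n : perp (-(2 • t)) (2 • y) := by
      have := (hperp1 _ _ hnt).2.2
      simpa [smul_neg] using this
    have h2nn : perp (-(2 • t)) (-(2 • y)) := by
      have := (hperp1 _ _ hntny).2.2
      simpa [smul_neg] using this
    have hs1 := hperp1 _ _ hsd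
    have h2sd : perp (2 • (t + y)) (2 • (t - y)) := hs1.2.2
    have hnsd : perp (-(t + y)) (t - y) := hs1.2.1
    have hnsnd : perp (-(t + y)) (-(t - y)) := (hperp1 _ _ hnsd).1
    have h2sd' := hperp1 _ _ h2sd
    have hnsd2 : perp (-(2 • (t + y))) (2 • (t - y)) := h2sd'.2.1
    have hnsnd2 : perp (-(2 • (t + y))) (-(2 • (t - y))) := (hperp1 _ _ hnsd2).1
    have e1 : g (2 • t) = g (t + y) + g (t - y) := E _ _ hsd _ (by abel)
    have e2 : g (2 • y) = g (t + y) + g (-(t - y)) := E _ _ hs1.1 _ (by abel)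
    have e3 : g (-(2 • t)) = g (-(t + y)) + g (-(t - y)) := E _ _ hnsnd _ (by abel)
    have e4 : g (-(2 • y)) = g (-(t + y)) + g (t - y) := E _ _ hnsd _ (by abel)
    have e5 : g (4 • t) = g (2 • (t + y)) + g (2 • (t - y)) := E _ _ h2sd _ (by abel)
    have e6 : g (2 • (t + y)) = g (2 • t) + g (2 • y) := E _ _ h2 _ (by abel)
    have e7 : g (2 • (t - y)) = g (2 • t) + g (-(2 • y)) := E _ _ h2' _ (by abel)
    have e8 : g (-(4 • t)) = g (-(2 • (t + y))) + g (-(2 • (t - y))) :=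
      E _ _ hnsnd2 _ (by abel)
    have e9 : g (-(2 • (t + y))) = g (-(2 • t)) + g (-(2 • y)) := E _ _ h2nn _ (by abel)
    have e10 : g (-(2 • (t - y))) = g (-(2 • t)) + g (2 • y) := E _ _ h2n _ (by abel)
    have key2 : g (2 • y) + g (-(2 • y)) = g (2 • t) + g (-(2 • t)) := by
      rw [e1, e2, e3, e4]; abel
    constructor
    · have h4 : g (4 • t) = g (2 • t) + g (2 • t) + (g (2 • y) + g (-(2 • y))) := by
        rw [e5, e6, e7]; abel
      rw [h4, key2]; abel
    · have h4 : g (-(4 • t)) = g (-(2 • t)) + g (-(2 • t)) + (g (2 • y) + g (-(2 • y))) := by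
        rw [e8, e9, e10]; abel
      rw [h4, key2]; abel
  intro n hn
  induction n, hn using Nat.le_induction with
  | base =>
    intro x
    obtain ⟨k1, k2⟩ := key x
    have h4 : (2 : ℕ) ^ (1 + 1) • x = 4 • x := by norm_num
    rw [h4, k1, k2]
    module
  | succ n hn ih =>
    intro x
    obtain ⟨k1, k2⟩ := key ((2 : ℕ) ^ n • x)
    have hw : 2 • ((2 : ℕ) ^ n • x) = (2 : ℕ) ^ (n + 1) • x := by
      rw [← mul_smul]; congr 1; ring
    have hz : (2 : ℕ) ^ (n + 1 + 1) • x = 4 • ((2 : ℕ) ^ n • x) := by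
      rw [← mul_smul]; congr 1; ring
    rw [hw] at k1 k2
    rw [hz, k1, k2, ih x]
    module
end

section
/- If g : X → Y is orthogonally additive on an Abelian group X (with ⊥ satisfying: x ⊥ y implies x ⊥ -y, -x ⊥ y, 2x ⊥ 2y; every x admits y with x ⊥ y and x+y ⊥ x-y) with values in a real vector space Y, then 3·g(4x) = 8·g(2x) + g(-4x) for every x ∈ X. -/
theorem stmt9 {X Y : Type*} [AddCommGroup X] [AddCommGroup Y] [Module ℝ Y]
    (perp : X → X → Prop)
    (hperp1 : ∀ x y, perp x y → perp x (-y) ∧ perp (-x) y ∧ perp (2 • x) (2 • y))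
    (hperp2 : ∀ x : X, ∃ y : X, perp x y ∧ perp (x + y) (x - y))
    (g : X → Y)
    (hgadd : ∀ x y, perp x y → g (x + y) = g x + g y) :
    ∀ x : X, 3 • g (4 • x) = 8 • g (2 • x) + g (-(4 • x)) := by
  intro x
  obtain ⟨y, hxy, hab⟩ := hperp2 x
  -- derived perpendicularities
  have hx_ny : perp x (-y) := (hperp1 x y hxy).1
  have hnx_y : perp (-x) y := (hperp1 x y hxy).2.1
  have hnx_ny : perp (-x) (-y) := (hperp1 (-x) y hnx_y).1
  have h2 : perp (2 • x) (2 • y) := (hperp1 x y hxy).2.2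
  have h2n : perp (2 • x) (-(2 • y)) := (hperp1 _ _ h2).1
  have hn2 : perp (-(2 • x)) (2 • y) := (hperp1 _ _ h2).2.1
  have hn2n : perp (-(2 • x)) (-(2 • y)) := (hperp1 _ _ hn2).1
  have hab_n : perp (x + y) (-(x - y)) := (hperp1 _ _ hab).1
  have hnab : perp (-(x + y)) (x - y) := (hperp1 _ _ hab).2.1
  have hnab_n : perp (-(x + y)) (-(x - y)) := (hperp1 _ _ hnab).1
  have hab2 : perp (2 • (x + y)) (2 • (x - y)) := (hperp1 _ _ hab).2.2
  -- basic values
  have gxy : g (x + y) = g x + g y := hgadd _ _ hxy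
  have gxny : g (x - y) = g x + g (-y) := by
    have := hgadd x (-y) hx_ny; rwa [← sub_eq_add_neg] at this
  have gnxy : g (-x + y) = g (-x) + g y := hgadd _ _ hnx_y
  have gnxny : g (-x + -y) = g (-x) + g (-y) := hgadd _ _ hnx_ny
  -- g(2x), g(-2x)
  have g2x : g (2 • x) = (g x + g y) + (g x + g (-y)) := by
    have h := hgadd _ _ hab
    rw [show (x + y) + (x - y) = 2 • x by abel] at h
    rw [h, gxy, gxny]
  have gm2x : g (-(2 • x)) = (g (-x) + g (-y)) + (g (-x) + g y) := by
    have h := hgadd _ _ hnab_n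
    rw [show (-(x + y)) + (-(x - y)) = -(2 • x) by abel,
        show (-(x + y)) = -x + -y by abel, show (-(x - y)) = -x + y by abel] at h
    rw [h, gnxny, gnxy]
  -- g(2y), g(-2y)
  have g2y : g (2 • y) = (g x + g y) + (g (-x) + g y) := by
    have h := hgadd _ _ hab_n
    rw [show (x + y) + (-(x - y)) = 2 • y by abel,
        show (-(x - y)) = -x + y by abel] at h
    rw [h, gxy, gnxy]
  have gm2y : g (-(2 • y)) = (g (-x) + g (-y)) + (g x + g (-y)) := by
    have h := hgadd _ _ hnab
    rw [show (-(x + y)) + (x - y) = -(2 • y) by abel,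
        show (-(x + y)) = -x + -y by abel] at h
    rw [h, gnxny, gxny]
  -- g(4x), g(-4x)
  have g4x : g (4 • x) = (g (2 • x) + g (2 • y)) + (g (2 • x) + g (-(2 • y))) := by
    have key := hgadd _ _ hab2
    rw [show ((2:ℕ) • (x + y)) + (2:ℕ) • (x - y) = (4:ℕ) • x by abel,
        show ((2:ℕ) • (x + y)) = (2:ℕ) • x + (2:ℕ) • y by abel,
        show ((2:ℕ) • (x - y)) = (2:ℕ) • x + -((2:ℕ) • y) by abel] at key
    rw [key, hgadd _ _ h2, hgadd _ _ h2n]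
  have gm4x : g (-(4 • x)) = (g (-(2 • x)) + g (2 • y)) + (g (-(2 • x)) + g (-(2 • y))) := by
    have hnab2 : perp (-(2 • (x + y))) (-(2 • (x - y))) :=
      (hperp1 _ _ (hperp1 _ _ hab2).2.1).1
    have key := hgadd _ _ hnab2
    rw [show (-((2:ℕ) • (x + y))) + -((2:ℕ) • (x - y)) = -((4:ℕ) • x) by abel,
        show (-((2:ℕ) • (x + y))) = -((2:ℕ) • x) + -((2:ℕ) • y) by abel,
        show (-((2:ℕ) • (x - y))) = -((2:ℕ) • x) + (2:ℕ) • y by abel] at key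
    rw [key, hgadd _ _ hn2n, hgadd _ _ hn2]
    abel
  rw [g4x, gm4x, g2x, gm2x, g2y, gm2y]
  abel
end

section
/- Corollary for p-Banach spaces: Let X be an Abelian group with orthogonality relation ⊥ (satisfying: x ⊥ y implies x ⊥ -y, -x ⊥ y, 2x ⊥ 2y; every x admits y with x ⊥ y and x+y ⊥ x-y), and let (Y, ‖·‖) be a complete p-normed space for some 0 < p ≤ 1 (‖x+y‖^p ≤ ‖x‖^p + ‖y‖^p and ‖ax‖ = |a|‖x‖). If f : X → Y satisfies ‖f(x+y) - f(x) - f(y)‖ ≤ ε whenever x ⊥ y, then there exists g : X → Y with g(x+y) = g(x)+g(y) whenever x ⊥ y and ‖f(x) - g(x)‖ ≤ b^(1/p)·ε for all x ∈ 2X, where b = ((2^(p+2)+3^(p+1)+3)/8^p)·(1 + Σ_{n=2}^∞ (((2^(n-1)+1)/(2·4^(n-1)))^p + ((2^(n-1)-1)/(2·4^(n-1)))^p)). Moreover g is unique on 2X. -/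
private lemma aux_subadd {p : ℝ} (hp0 : 0 ≤ p) (hp1 : p ≤ 1) {x y : ℝ} (hx : 0 ≤ x)
    (hy : 0 ≤ y) : (x + y) ^ p ≤ x ^ p + y ^ p := by
  have h := NNReal.rpow_add_le_add_rpow x.toNNReal y.toNNReal hp0 hp1
  rw [← NNReal.coe_le_coe] at h
  push_cast [NNReal.coe_rpow, Real.coe_toNNReal x hx, Real.coe_toNNReal y hy] at h
  exact h

private lemma aux_pow_rpow (n : ℕ) {x : ℝ} (hx : 0 ≤ x) (p : ℝ) : (x ^ n) ^ p = (x ^ p) ^ n := by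
  rw [← Real.rpow_natCast x n, ← Real.rpow_natCast (x ^ p) n, ← Real.rpow_mul hx,
    ← Real.rpow_mul hx, mul_comm]

noncomputable def ccc (n : ℕ) : ℝ := ((2:ℝ)^n + 1)/(2*(4:ℝ)^n)
noncomputable def ddd (n : ℕ) : ℝ := ((2:ℝ)^n - 1)/(2*(4:ℝ)^n)

private lemma h2pos (n : ℕ) : (0:ℝ) < 2^n := by positivity
private lemma h2one (n : ℕ) : (1:ℝ) ≤ 2^n := one_le_pow₀ (by norm_num)
private lemma h4eq (n : ℕ) : (4:ℝ)^n = 2^n * 2^n := by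
  rw [show (4:ℝ) = 2*2 by norm_num, mul_pow]

private lemma ccc0 : ccc 0 = 1 := by norm_num [ccc]
private lemma ddd0 : ddd 0 = 0 := by norm_num [ddd]
private lemma ccc1 : ccc 1 = 3/8 := by norm_num [ccc]
private lemma ddd1 : ddd 1 = 1/8 := by norm_num [ddd]

private lemma ccc_nonneg (n : ℕ) : 0 ≤ ccc n := by
  have := h2pos n; unfold ccc; positivity

private lemma ddd_nonneg (n : ℕ) : 0 ≤ ddd n := by
  have h1 := h2one n; have h2 := h2pos n
  apply div_nonneg (by linarith)
  positivity

private lemma ccc_id (n : ℕ) : 3 * ccc (n+1) - ddd (n+1) = ccc n := by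
  have := h2pos n
  simp only [ccc, ddd, pow_succ, h4eq]
  field_simp; ring

private lemma ddd_id (n : ℕ) : 3 * ddd (n+1) - ccc (n+1) = ddd n := by
  have := h2pos n
  simp only [ccc, ddd, pow_succ, h4eq]
  field_simp; ring

private lemma ccdd_inv (n : ℕ) : ccc (n+1) - ddd (n+1) = ((4:ℝ)^(n+1))⁻¹ := by
  have := h2pos (n+1)
  simp only [ccc, ddd, h4eq]
  field_simp; ring

private lemma ccdd_sum (n : ℕ) : ccc n + ddd n = (1/2:ℝ)^n := by
  have := h2pos n
  simp only [ccc, ddd, h4eq, div_pow, one_pow]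
  field_simp; ring

private lemma ccc_le (n : ℕ) : ccc n ≤ (1/2:ℝ)^n := by
  have h := ddd_nonneg n
  have := ccdd_sum n
  linarith

private lemma ddd_le (n : ℕ) : ddd n ≤ (1/2:ℝ)^n := by
  have h := ccc_nonneg n
  have := ccdd_sum n
  linarith

private lemma ccc_le' (n : ℕ) : ccc (n+1) ≤ (1/2:ℝ)^n * (3/8) := by
  have h1 := h2one n; have h2 := h2pos n
  simp only [ccc, pow_succ, h4eq, div_pow, one_pow]
  rw [div_le_iff₀ (by positivity)]
  have hinv : (1:ℝ)/2^n * 2^n = 1 := by field_simp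
  nlinarith [h2pos n, hinv]

private lemma ddd_le' (n : ℕ) : ddd (n+1) ≤ (1/2:ℝ)^n * (1/4) := by
  have h1 := h2one n; have h2 := h2pos n
  simp only [ddd, pow_succ, h4eq, div_pow, one_pow]
  rw [div_le_iff₀ (by positivity)]
  have hinv : (1:ℝ)/2^n * 2^n = 1 := by field_simp
  nlinarith [h2pos n, hinv]

private lemma inv4_le' (n : ℕ) (hn : 1 ≤ n) : ((4:ℝ)^(n+1))⁻¹ ≤ (1/2:ℝ)^n * (1/8) := by
  have h2 := h2pos n
  have h2' : (2:ℝ) ≤ 2^n := by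
    calc (2:ℝ) = 2^1 := (pow_one 2).symm
    _ ≤ 2^n := pow_le_pow_right₀ (by norm_num) hn
  have heq : (4:ℝ)^(n+1) = 2^n*2^n*4 := by rw [pow_succ, h4eq]
  rw [heq]
  have : (1/2:ℝ)^n = (2^n)⁻¹ := by rw [one_div, inv_pow]
  rw [this, inv_le_iff_one_le_mul₀ (by positivity)]
  have : (2:ℝ)^n * (2^n)⁻¹ = 1 := by field_simp
  nlinarith [this]

set_option maxHeartbeats 2000000 in



theorem stmt12 {X Y : Type*} [AddCommGroup X] [AddCommGroup Y] [Module ℝ Y]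
    (perp : X → X → Prop)
    (hperp1 : ∀ x y, perp x y → perp x (-y) ∧ perp (-x) y ∧ perp (2 • x) (2 • y))
    (hperp2 : ∀ x : X, ∃ y : X, perp x y ∧ perp (x + y) (x - y))
    (p : ℝ) (hp0 : 0 < p) (hp1 : p ≤ 1)
    (q : Y → ℝ)
    (hqnn : ∀ y : Y, 0 ≤ q y)
    (hq0 : ∀ y : Y, q y = 0 ↔ y = 0)
    (hqhom : ∀ (a : ℝ) (y : Y), q (a • y) = |a| * q y)
    (hqsub : ∀ y z : Y, q (y + z) ^ p ≤ q y ^ p + q z ^ p)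
    (hcomp : ∀ u : ℕ → Y,
      (∀ δ > (0 : ℝ), ∃ M : ℕ, ∀ m n, M ≤ m → M ≤ n → q (u m - u n) < δ) →
      ∃ l : Y, ∀ δ > (0 : ℝ), ∃ M : ℕ, ∀ n, M ≤ n → q (u n - l) < δ)
    (ε : ℝ) (hε : 0 ≤ ε)
    (b : ℝ)
    (hb : b = ((2 : ℝ) ^ (p + 2) + (3 : ℝ) ^ (p + 1) + 3) / (8 : ℝ) ^ p *
      (1 + ∑' k : ℕ,
        ((((2 : ℝ) ^ (k + 1) + 1) / (2 * (4 : ℝ) ^ (k + 1))) ^ p +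
         (((2 : ℝ) ^ (k + 1) - 1) / (2 * (4 : ℝ) ^ (k + 1))) ^ p)))
    (f : X → Y)
    (hf : ∀ x y, perp x y → q (f (x + y) - f x - f y) ≤ ε) :
    ∃ g : X → Y,
      (∀ x y, perp x y → g (x + y) = g x + g y) ∧
      (∀ x : X, q (f (2 • x) - g (2 • x)) ≤ b ^ (1 / p) * ε) ∧
      (∀ g' : X → Y,
        (∀ x y, perp x y → g' (x + y) = g' x + g' y) →
        (∀ x : X, q (f (2 • x) - g' (2 • x)) ≤ b ^ (1 / p) * ε) →
        ∀ x : X, g' (2 • x) = g (2 • x)) := by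

  -- the Q-functional
  set Q : Y → ℝ := fun w => q w ^ p with hQdef
  have hQN : ∀ w, 0 ≤ Q w := fun w => Real.rpow_nonneg (hqnn w) p
  have hqneg : ∀ w, q (-w) = q w := by
    intro w
    rw [← neg_one_smul ℝ w, hqhom]
    norm_num
  have hQneg : ∀ w, Q (-w) = Q w := by
    intro w; simp only [hQdef, hqneg]
  have hQadd : ∀ w z, Q (w + z) ≤ Q w + Q z := hqsub
  have hQsmul : ∀ (a : ℝ) w, Q (a • w) = |a| ^ p * Q w := by
    intro a w
    simp only [hQdef, hqhom]
    exact Real.mul_rpow (abs_nonneg _) (hqnn _)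
  have hQzero : Q 0 = 0 := by
    simp only [hQdef, (hq0 0).2 rfl, Real.zero_rpow hp0.ne']
  have hQeq0 : ∀ w, Q w ≤ 0 → w = 0 := by
    intro w hw
    by_contra h
    have hq : 0 < q w := lt_of_le_of_ne (hqnn w) (fun e => h ((hq0 w).1 e.symm))
    exact absurd (lt_of_lt_of_le (Real.rpow_pos_of_pos hq p) hw) (lt_irrefl 0)
  have hQsub : ∀ w z, Q (w - z) ≤ Q w + Q z := by
    intro w z
    rw [sub_eq_add_neg]
    calc Q (w + -z) ≤ Q w + Q (-z) := hQadd _ _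
    _ = Q w + Q z := by rw [hQneg]
  have hQle' : ∀ w (s : ℝ), q w ≤ s → Q w ≤ s ^ p :=
    fun w s h => Real.rpow_le_rpow (hqnn w) h hp0.le
  have hQlt' : ∀ w (s : ℝ), q w < s → Q w < s ^ p :=
    fun w s h => Real.rpow_lt_rpow (hqnn w) h hp0
  have hQle : ∀ w (s : ℝ), 0 ≤ s → Q w ≤ s ^ p → q w ≤ s := by
    intro w s hs h
    by_contra hc
    push_neg at hc
    exact absurd (lt_of_le_of_lt h (Real.rpow_lt_rpow hs hc hp0)) (lt_irrefl _)
  have hQlt : ∀ w (s : ℝ), 0 ≤ s → Q w < s ^ p → q w < s := by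
    intro w s hs h
    by_contra hc
    push_neg at hc
    exact absurd (lt_of_le_of_lt (Real.rpow_le_rpow hs hc hp0.le) h) (lt_irrefl _)
  set εp : ℝ := ε ^ p with hεpdef
  have hεp : 0 ≤ εp := Real.rpow_nonneg hε p
  have hfQ : ∀ a bb, perp a bb → Q (f (a + bb) - f a - f bb) ≤ εp :=
    fun a bb h => hQle' _ _ (hf a bb h)
  -- geometric ratio
  set ρ : ℝ := (1/2:ℝ) ^ p with hρdef
  have hρ0 : 0 ≤ ρ := Real.rpow_nonneg (by norm_num) p
  have hρ1 : ρ < 1 := Real.rpow_lt_one (by norm_num) (by norm_num) hp0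
  have hpowρ : ∀ n : ℕ, ((1/2:ℝ)^n) ^ p = ρ ^ n := fun n => aux_pow_rpow n (by norm_num) p
  have hsmall : ∀ (K η : ℝ), 0 ≤ K → 0 < η → ∃ N, ∀ n, N ≤ n → K * ρ ^ n < η := by
    intro K η hK hη
    rcases eq_or_lt_of_le hK with h0 | hKpos
    · exact ⟨0, fun n _ => by rw [← h0, zero_mul]; exact hη⟩
    · obtain ⟨N, hN⟩ := exists_pow_lt_of_lt_one (div_pos hη hKpos) hρ1
      refine ⟨N, fun n hn => ?_⟩
      have h1 : ρ ^ n ≤ ρ ^ N := pow_le_pow_of_le_one hρ0 hρ1.le hn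
      calc K * ρ ^ n ≤ K * ρ ^ N := by nlinarith
      _ < K * (η / K) := by nlinarith
      _ = η := by field_simp
  -- τ and σ
  set τ : ℕ → ℝ := fun n => ccc n ^ p + ddd n ^ p with hτdef
  set σ : ℕ → ℝ := fun n => 3 * ccc (n+1) ^ p + 3 * ddd (n+1) ^ p + 4 * (((4:ℝ)^(n+1))⁻¹) ^ p
    with hσdef
  set C : ℝ := 3 * ((3/8:ℝ)) ^ p + 4 * ((1/4:ℝ)) ^ p + 3 * ((1/8:ℝ)) ^ p with hCdef
  have hC0 : 0 ≤ C := by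
    have h1 : (0:ℝ) ≤ (3/8:ℝ) ^ p := Real.rpow_nonneg (by norm_num) p
    have h2 : (0:ℝ) ≤ (1/4:ℝ) ^ p := Real.rpow_nonneg (by norm_num) p
    have h3 : (0:ℝ) ≤ (1/8:ℝ) ^ p := Real.rpow_nonneg (by norm_num) p
    simp only [hCdef]; linarith
  have hτnn : ∀ n, 0 ≤ τ n := by
    intro n
    have h1 : (0:ℝ) ≤ ccc n ^ p := Real.rpow_nonneg (ccc_nonneg n) p
    have h2 : (0:ℝ) ≤ ddd n ^ p := Real.rpow_nonneg (ddd_nonneg n) p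
    simp only [hτdef]; linarith
  have hτle : ∀ n, τ n ≤ 2 * ρ ^ n := by
    intro n
    have h1 : ccc n ^ p ≤ ρ ^ n := by
      rw [← hpowρ n]
      exact Real.rpow_le_rpow (ccc_nonneg n) (ccc_le n) hp0.le
    have h2 : ddd n ^ p ≤ ρ ^ n := by
      rw [← hpowρ n]
      exact Real.rpow_le_rpow (ddd_nonneg n) (ddd_le n) hp0.le
    simp only [hτdef]; linarith
  have hτge : ∀ n, ρ ^ n ≤ τ n := by
    intro n
    rw [← hpowρ n, ← ccdd_sum n]
    exact aux_subadd hp0.le hp1 (ccc_nonneg n) (ddd_nonneg n)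
  have hστ : ∀ n, σ n ≤ C * τ n := by
    intro n
    match n with
    | 0 =>
      have hτ0 : τ 0 = 1 := by
        simp only [hτdef, ccc0, ddd0, Real.one_rpow, Real.zero_rpow hp0.ne']
        norm_num
      have : σ 0 = C := by
        simp only [hσdef, hCdef]
        norm_num [ccc1, ddd1]
        ring
      rw [this, hτ0, mul_one]
    | Nat.succ m =>
      set n := m + 1
      have hA : (0:ℝ) ≤ (1/2:ℝ)^n := by positivity
      have h1 : ccc (n+1) ^ p ≤ ρ^n * (3/8:ℝ)^p := by
        rw [← hpowρ n, ← Real.mul_rpow hA (by norm_num)]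
        exact Real.rpow_le_rpow (ccc_nonneg _) (ccc_le' n) hp0.le
      have h2 : ddd (n+1) ^ p ≤ ρ^n * (1/4:ℝ)^p := by
        rw [← hpowρ n, ← Real.mul_rpow hA (by norm_num)]
        exact Real.rpow_le_rpow (ddd_nonneg _) (ddd_le' n) hp0.le
      have h3 : (((4:ℝ)^(n+1))⁻¹) ^ p ≤ ρ^n * (1/8:ℝ)^p := by
        rw [← hpowρ n, ← Real.mul_rpow hA (by norm_num)]
        exact Real.rpow_le_rpow (by positivity) (inv4_le' n (by omega)) hp0.le
      have h8 : ((1/8:ℝ))^p ≤ ((1/4:ℝ))^p :=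
        Real.rpow_le_rpow (by norm_num) (by norm_num) hp0.le
      have hρn : (0:ℝ) ≤ ρ^n := pow_nonneg hρ0 n
      have hτn := hτge n
      have hCρ : ρ^n * C ≤ τ n * C := mul_le_mul_of_nonneg_right hτn hC0
      simp only [hσdef, hCdef] at *
      nlinarith [Real.rpow_nonneg (show (0:ℝ) ≤ 3/8 by norm_num) p,
        Real.rpow_nonneg (show (0:ℝ) ≤ 1/4 by norm_num) p,
        Real.rpow_nonneg (show (0:ℝ) ≤ 1/8 by norm_num) p]
  -- the constant C equals the factor in hb
  have h2p : (0:ℝ) < 2 ^ p := Real.rpow_pos_of_pos (by norm_num) p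
  have h4p : (0:ℝ) < 4 ^ p := Real.rpow_pos_of_pos (by norm_num) p
  have hfactor : ((2:ℝ) ^ (p + 2) + (3:ℝ) ^ (p + 1) + 3) / (8:ℝ) ^ p = C := by
    have h2 : (2:ℝ) ^ (p + (2:ℝ)) = 2 ^ p * 4 := by
      rw [Real.rpow_add (by norm_num : (0:ℝ) < 2)]
      congr 1
      have h : (2:ℝ) ^ (2:ℝ) = (2:ℝ) ^ (2:ℕ) := by
        rw [← Real.rpow_natCast (2:ℝ) 2]
        norm_num
      rw [h]
      norm_num
    have h3 : (3:ℝ) ^ (p + 1) = 3 ^ p * 3 := by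
      rw [Real.rpow_add (by norm_num : (0:ℝ) < 3), Real.rpow_one]
    have h8 : (8:ℝ) ^ p = 2 ^ p * 4 ^ p := by
      rw [show (8:ℝ) = 2 * 4 by norm_num, Real.mul_rpow (by norm_num) (by norm_num)]
    have h38 : ((3/8:ℝ)) ^ p = 3 ^ p / (2 ^ p * 4 ^ p) := by
      rw [Real.div_rpow (by norm_num) (by norm_num), h8]
    have h14 : ((1/4:ℝ)) ^ p = 1 / 4 ^ p := by
      rw [Real.div_rpow (by norm_num) (by norm_num), Real.one_rpow]
    have h18 : ((1/8:ℝ)) ^ p = 1 / (2 ^ p * 4 ^ p) := by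
      rw [Real.div_rpow (by norm_num) (by norm_num), Real.one_rpow, h8]
    simp only [hCdef, h38, h14, h18, h2, h3, h8]
    field_simp
    ring
  have hsummand : ∀ k : ℕ, (((2:ℝ) ^ (k+1) + 1) / (2 * (4:ℝ) ^ (k+1))) ^ p +
      (((2:ℝ) ^ (k+1) - 1) / (2 * (4:ℝ) ^ (k+1))) ^ p = τ (k+1) := fun k => rfl
  have hτs : Summable (fun k => τ (k+1)) := by
    refine Summable.of_nonneg_of_le (fun k => hτnn (k+1)) (fun k => ?_)
      ((summable_geometric_of_lt_one hρ0 hρ1).mul_left 2)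
    have h := hτle (k+1)
    have h2 : ρ ^ (k+1) = ρ ^ k * ρ := pow_succ ρ k
    have h3 : (0:ℝ) ≤ ρ ^ k := pow_nonneg hρ0 k
    nlinarith
  set S : ℝ := ∑' k, τ (k+1) with hSdef
  have hS0 : 0 ≤ S := tsum_nonneg (fun k => hτnn _)
  have hb' : b = C * (1 + S) := by
    rw [hb, hfactor, hSdef, tsum_congr hsummand]
  have hb0 : 0 ≤ b := by
    rw [hb']
    exact mul_nonneg hC0 (by linarith)
  have hpartial : ∀ N, (∑ n ∈ Finset.range N, σ n) ≤ C * (1 + S) := by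
    intro N
    have h1 : (∑ n ∈ Finset.range N, σ n) ≤ ∑ n ∈ Finset.range N, C * τ n :=
      Finset.sum_le_sum (fun i _ => hστ i)
    have h2 : ∑ n ∈ Finset.range N, C * τ n = C * ∑ n ∈ Finset.range N, τ n := by
      rw [Finset.mul_sum]
    have h3 : ∑ n ∈ Finset.range N, τ n ≤ 1 + S := by
      cases N with
      | zero => simp; linarith
      | succ m =>
        rw [Finset.sum_range_succ']
        have hτ0 : τ 0 = 1 := by
          simp only [hτdef, ccc0, ddd0, Real.one_rpow, Real.zero_rpow hp0.ne']
          norm_num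
        have h4 : ∑ i ∈ Finset.range m, τ (i+1) ≤ S :=
          Summable.sum_le_tsum (Finset.range m) (fun i _ => hτnn _) hτs
        rw [hτ0]
        linarith
    calc (∑ n ∈ Finset.range N, σ n) ≤ C * ∑ n ∈ Finset.range N, τ n := by rw [← h2]; exact h1
    _ ≤ C * (1 + S) := mul_le_mul_of_nonneg_left h3 hC0
  -- perp helpers
  have hpneg1 : ∀ a bb, perp a bb → perp a (-bb) := fun a bb h => (hperp1 a bb h).1
  have hpneg2 : ∀ a bb, perp a bb → perp (-a) bb := fun a bb h => (hperp1 a bb h).2.1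
  have hp2 : ∀ a bb, perp a bb → perp (2 • a) (2 • bb) := fun a bb h => (hperp1 a bb h).2.2
  have hpnegneg : ∀ a bb, perp a bb → perp (-a) (-bb) := fun a bb h => hpneg1 _ _ (hpneg2 _ _ h)
  have hppow : ∀ (n : ℕ) a bb, perp a bb → perp ((2^n : ℕ) • a) ((2^n : ℕ) • bb) := by
    intro n
    induction n with
    | zero => intro a bb h; simpa using h
    | succ m ih =>
      intro a bb h
      have h2 := hp2 _ _ (ih a bb h)
      have e : ∀ z : X, 2 • ((2^m : ℕ) • z) = (2^(m+1) : ℕ) • z := by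
        intro z; rw [smul_smul]; congr 1; ring
      rwa [e, e] at h2
  -- sum estimates helpers
  have hQadd3 : ∀ a bb c : Y, Q (a + bb + c) ≤ Q a + Q bb + Q c := by
    intro a bb c
    calc Q (a + bb + c) ≤ Q (a + bb) + Q c := hQadd _ _
    _ ≤ Q a + Q bb + Q c := by linarith [hQadd a bb]
  have hQ4 : ∀ a bb c d : Y, Q (a + bb - c - d) ≤ Q a + Q bb + Q c + Q d := by
    intro a bb c d
    calc Q (a + bb - c - d) ≤ Q (a + bb - c) + Q d := hQsub _ _
    _ ≤ Q (a + bb) + Q c + Q d := by linarith [hQsub (a + bb) c]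
    _ ≤ Q a + Q bb + Q c + Q d := by linarith [hQadd a bb]
  -- the key step estimate
  have stepQ : ∀ (v : X) (n : ℕ),
      Q (ccc (n+1) • f ((2:ℕ) • (2:ℕ) • v) - ddd (n+1) • f (-((2:ℕ) • (2:ℕ) • v)) -
        (ccc n • f ((2:ℕ) • v) - ddd n • f (-((2:ℕ) • v)))) ≤ σ n * εp := by
    intro v n
    obtain ⟨y, hy1, hy2⟩ := hperp2 v
    have P1 := hp2 _ _ hy2
    have P2 := hp2 _ _ hy1
    have P3 := hpneg1 _ _ P2
    have P4 := hpnegneg _ _ P1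
    have P5 := hpnegneg _ _ P2
    have P6 := hpneg2 _ _ P2
    have P7 := hpneg1 _ _ hy2
    have P8 := hpneg2 _ _ hy2
    have P10 := hpnegneg _ _ hy2
    have d1 : Q (f ((2:ℕ) • (2:ℕ) • v) - f ((2:ℕ) • (v+y)) - f ((2:ℕ) • (v-y))) ≤ εp := by
      have h := hfQ _ _ P1
      rwa [show (2:ℕ) • (v+y) + (2:ℕ) • (v-y) = (2:ℕ) • (2:ℕ) • v by abel] at h
    have d2 : Q (f ((2:ℕ) • (v+y)) - f ((2:ℕ) • v) - f ((2:ℕ) • y)) ≤ εp := by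
      have h := hfQ _ _ P2
      rwa [show (2:ℕ) • v + (2:ℕ) • y = (2:ℕ) • (v+y) by abel] at h
    have d3 : Q (f ((2:ℕ) • (v-y)) - f ((2:ℕ) • v) - f (-((2:ℕ) • y))) ≤ εp := by
      have h := hfQ _ _ P3
      rwa [show (2:ℕ) • v + -((2:ℕ) • y) = (2:ℕ) • (v-y) by abel] at h
    have d4 : Q (f (-((2:ℕ) • (2:ℕ) • v)) - f (-((2:ℕ) • (v+y))) - f (-((2:ℕ) • (v-y)))) ≤ εp := by
      have h := hfQ _ _ P4
      rwa [show -((2:ℕ) • (v+y)) + -((2:ℕ) • (v-y)) = -((2:ℕ) • (2:ℕ) • v) by abel] at h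
    have d5 : Q (f (-((2:ℕ) • (v+y))) - f (-((2:ℕ) • v)) - f (-((2:ℕ) • y))) ≤ εp := by
      have h := hfQ _ _ P5
      rwa [show -((2:ℕ) • v) + -((2:ℕ) • y) = -((2:ℕ) • (v+y)) by abel] at h
    have d6 : Q (f (-((2:ℕ) • (v-y))) - f (-((2:ℕ) • v)) - f ((2:ℕ) • y)) ≤ εp := by
      have h := hfQ _ _ P6
      rwa [show -((2:ℕ) • v) + (2:ℕ) • y = -((2:ℕ) • (v-y)) by abel] at h
    have d7 : Q (f ((2:ℕ) • y) - f (v+y) - f (-(v-y))) ≤ εp := by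
      have h := hfQ _ _ P7
      rwa [show (v+y) + -(v-y) = (2:ℕ) • y by abel] at h
    have d8 : Q (f (-((2:ℕ) • y)) - f (-(v+y)) - f (v-y)) ≤ εp := by
      have h := hfQ _ _ P8
      rwa [show -(v+y) + (v-y) = -((2:ℕ) • y) by abel] at h
    have d9 : Q (f ((2:ℕ) • v) - f (v+y) - f (v-y)) ≤ εp := by
      have h := hfQ _ _ hy2
      rwa [show (v+y) + (v-y) = (2:ℕ) • v by abel] at h
    have d10 : Q (f (-((2:ℕ) • v)) - f (-(v+y)) - f (-(v-y))) ≤ εp := by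
      have h := hfQ _ _ P10
      rwa [show -(v+y) + -(v-y) = -((2:ℕ) • v) by abel] at h
    set E1 : Y := (f ((2:ℕ) • (2:ℕ) • v) - f ((2:ℕ) • (v+y)) - f ((2:ℕ) • (v-y))) + (f ((2:ℕ) • (v+y)) - f ((2:ℕ) • v) - f ((2:ℕ) • y))
        + (f ((2:ℕ) • (v-y)) - f ((2:ℕ) • v) - f (-((2:ℕ) • y))) with hE1
    set E2 : Y := (f (-((2:ℕ) • (2:ℕ) • v)) - f (-((2:ℕ) • (v+y))) - f (-((2:ℕ) • (v-y))))
        + (f (-((2:ℕ) • (v+y))) - f (-((2:ℕ) • v)) - f (-((2:ℕ) • y)))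
        + (f (-((2:ℕ) • (v-y))) - f (-((2:ℕ) • v)) - f ((2:ℕ) • y)) with hE2
    set R : Y := (f ((2:ℕ) • y) - f (v+y) - f (-(v-y))) + (f (-((2:ℕ) • y)) - f (-(v+y)) - f (v-y))
        - (f ((2:ℕ) • v) - f (v+y) - f (v-y)) - (f (-((2:ℕ) • v)) - f (-(v+y)) - f (-(v-y))) with hR
    have hQE1 : Q E1 ≤ 3 * εp := by
      rw [hE1]
      have := hQadd3 (f ((2:ℕ) • (2:ℕ) • v) - f ((2:ℕ) • (v+y)) - f ((2:ℕ) • (v-y)))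
        (f ((2:ℕ) • (v+y)) - f ((2:ℕ) • v) - f ((2:ℕ) • y)) (f ((2:ℕ) • (v-y)) - f ((2:ℕ) • v) - f (-((2:ℕ) • y)))
      linarith
    have hQE2 : Q E2 ≤ 3 * εp := by
      rw [hE2]
      have := hQadd3 (f (-((2:ℕ) • (2:ℕ) • v)) - f (-((2:ℕ) • (v+y))) - f (-((2:ℕ) • (v-y))))
        (f (-((2:ℕ) • (v+y))) - f (-((2:ℕ) • v)) - f (-((2:ℕ) • y))) (f (-((2:ℕ) • (v-y))) - f (-((2:ℕ) • v)) - f ((2:ℕ) • y))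
      linarith
    have hQR : Q R ≤ 4 * εp := by
      rw [hR]
      have := hQ4 (f ((2:ℕ) • y) - f (v+y) - f (-(v-y))) (f (-((2:ℕ) • y)) - f (-(v+y)) - f (v-y))
        (f ((2:ℕ) • v) - f (v+y) - f (v-y)) (f (-((2:ℕ) • v)) - f (-(v+y)) - f (-(v-y)))
      linarith
    have key : ccc (n+1) • f ((2:ℕ) • (2:ℕ) • v) - ddd (n+1) • f (-((2:ℕ) • (2:ℕ) • v)) -
        (ccc n • f ((2:ℕ) • v) - ddd n • f (-((2:ℕ) • v)))
        = ccc (n+1) • E1 - ddd (n+1) • E2 + (ccc (n+1) - ddd (n+1)) • R := by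
      rw [← ccc_id n, ← ddd_id n, hE1, hE2, hR]
      module
    rw [key]
    have b1 : Q (ccc (n+1) • E1) ≤ ccc (n+1) ^ p * (3 * εp) := by
      rw [hQsmul, abs_of_nonneg (ccc_nonneg _)]
      exact mul_le_mul_of_nonneg_left hQE1 (Real.rpow_nonneg (ccc_nonneg _) p)
    have b2 : Q (ddd (n+1) • E2) ≤ ddd (n+1) ^ p * (3 * εp) := by
      rw [hQsmul, abs_of_nonneg (ddd_nonneg _)]
      exact mul_le_mul_of_nonneg_left hQE2 (Real.rpow_nonneg (ddd_nonneg _) p)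
    have b3 : Q ((ccc (n+1) - ddd (n+1)) • R) ≤ (((4:ℝ)^(n+1))⁻¹) ^ p * (4 * εp) := by
      rw [ccdd_inv n, hQsmul, abs_of_nonneg (by positivity)]
      exact mul_le_mul_of_nonneg_left hQR (Real.rpow_nonneg (by positivity) p)
    have hsplit : Q (ccc (n+1) • E1 - ddd (n+1) • E2 + (ccc (n+1) - ddd (n+1)) • R)
        ≤ Q (ccc (n+1) • E1) + Q (ddd (n+1) • E2) + Q ((ccc (n+1) - ddd (n+1)) • R) := by
      calc Q (ccc (n+1) • E1 - ddd (n+1) • E2 + (ccc (n+1) - ddd (n+1)) • R)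
          ≤ Q (ccc (n+1) • E1 - ddd (n+1) • E2) + Q ((ccc (n+1) - ddd (n+1)) • R) := hQadd _ _
      _ ≤ _ := by linarith [hQsub (ccc (n+1) • E1) (ddd (n+1) • E2)]
    have : σ n * εp = ccc (n+1) ^ p * (3 * εp) + ddd (n+1) ^ p * (3 * εp)
        + (((4:ℝ)^(n+1))⁻¹) ^ p * (4 * εp) := by
      simp only [hσdef]; ring
    rw [this]
    linarith
  -- the approximating sequence
  set u : X → ℕ → Y := fun x n => ccc n • f ((2^n : ℕ) • x) - ddd n • f (-((2^n : ℕ) • x))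
    with hudef
  clear_value u S τ σ C ρ εp Q
  have hu0 : ∀ x : X, u x 0 = f x := by
    intro x
    simp only [hudef, ccc0, ddd0, pow_zero, one_smul, zero_smul, sub_zero]
  have hstep0 : ∀ (x : X) (n : ℕ), Q (u ((2:ℕ) • x) (n+1) - u ((2:ℕ) • x) n) ≤ σ n * εp := by
    intro x n
    have h := stepQ ((2^n : ℕ) • x) n
    have e1 : (2^(n+1) : ℕ) • ((2:ℕ) • x) = (2:ℕ) • (2:ℕ) • ((2^n : ℕ) • x) := by
      rw [smul_smul, smul_smul, smul_smul]; congr 1; ring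
    have e2 : (2^n : ℕ) • ((2:ℕ) • x) = (2:ℕ) • ((2^n : ℕ) • x) := by
      rw [smul_smul, smul_smul]; congr 1; ring
    simp only [hudef]
    rw [e1, e2]
    exact h
  have hstepu : ∀ (x : X) (n : ℕ), Q (u x (n+2) - u x (n+1)) ≤ σ (n+1) * εp := by
    intro x n
    have h := stepQ ((2^n : ℕ) • x) (n+1)
    have e1 : (2^(n+2) : ℕ) • x = (2:ℕ) • (2:ℕ) • ((2^n : ℕ) • x) := by
      rw [smul_smul, smul_smul]; congr 1; ring
    have e2 : (2^(n+1) : ℕ) • x = (2:ℕ) • ((2^n : ℕ) • x) := by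
      rw [smul_smul]; congr 1; ring
    simp only [hudef]
    rw [e1, e2]
    exact h
  have htel0 : ∀ (x : X) (N : ℕ), Q (u ((2:ℕ) • x) N - u ((2:ℕ) • x) 0)
      ≤ (∑ n ∈ Finset.range N, σ n) * εp := by
    intro x N
    induction N with
    | zero => simp [sub_self, hQzero]
    | succ m ih =>
      have hh : u ((2:ℕ) • x) (m+1) - u ((2:ℕ) • x) 0
          = (u ((2:ℕ) • x) (m+1) - u ((2:ℕ) • x) m) + (u ((2:ℕ) • x) m - u ((2:ℕ) • x) 0) := by
        abel
      rw [hh]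
      have h2 := hQadd (u ((2:ℕ) • x) (m+1) - u ((2:ℕ) • x) m)
        (u ((2:ℕ) • x) m - u ((2:ℕ) • x) 0)
      have h3 := hstep0 x m
      rw [Finset.sum_range_succ, add_mul]
      linarith
  have htelx : ∀ (x : X) (n k : ℕ), Q (u x (n+1+k) - u x (n+1))
      ≤ (∑ j ∈ Finset.range k, σ (n+1+j)) * εp := by
    intro x n k
    induction k with
    | zero => simp [sub_self, hQzero]
    | succ m ih =>
      rw [show n+1+(m+1) = (n+m)+2 from by ring]
      have hh : u x ((n+m)+2) - u x (n+1)
          = (u x ((n+m)+2) - u x ((n+m)+1)) + (u x ((n+m)+1) - u x (n+1)) := by abel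
      rw [hh]
      have h2 := hQadd (u x ((n+m)+2) - u x ((n+m)+1)) (u x ((n+m)+1) - u x (n+1))
      have h3 := hstepu x (n+m)
      have ih' := ih
      rw [show n+1+m = (n+m)+1 from by ring] at ih'
      rw [Finset.sum_range_succ, add_mul, show n+1+m = (n+m)+1 from by ring]
      linarith
  have hσgeom : ∀ m, σ m ≤ 2*C*ρ^m := by
    intro m
    have h1 := hστ m
    have h2 := hτle m
    nlinarith [hτnn m, hC0]
  have hK0 : (0:ℝ) ≤ (1 - ρ)⁻¹ := by
    have : 0 < 1 - ρ := by linarith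
    positivity
  have hgeosum : ∀ n k : ℕ, (∑ j ∈ Finset.range k, σ (n+1+j)) ≤ 2*C*(1-ρ)⁻¹ * ρ^(n+1) := by
    intro n k
    have h1 : (∑ j ∈ Finset.range k, σ (n+1+j)) ≤ ∑ j ∈ Finset.range k, 2*C*ρ^(n+1) * ρ^j := by
      apply Finset.sum_le_sum
      intro i _
      have h := hσgeom (n+1+i)
      rw [pow_add] at h
      calc σ (n+1+i) ≤ 2*C*(ρ^(n+1) * ρ^i) := h
      _ = 2*C*ρ^(n+1) * ρ^i := by ring
    have h2 : ∑ j ∈ Finset.range k, 2*C*ρ^(n+1) * ρ^j = 2*C*ρ^(n+1) * ∑ j ∈ Finset.range k, ρ^j := by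
      rw [Finset.mul_sum]
    have h3 : ∑ j ∈ Finset.range k, ρ^j ≤ (1-ρ)⁻¹ := by
      have h := Summable.sum_le_tsum (Finset.range k) (fun i _ => pow_nonneg hρ0 i)
        (summable_geometric_of_lt_one hρ0 hρ1)
      rwa [tsum_geometric_of_lt_one hρ0 hρ1] at h
    have h4 : (0:ℝ) ≤ 2*C*ρ^(n+1) := by
      have := pow_nonneg hρ0 (n+1)
      nlinarith [hC0]
    calc (∑ j ∈ Finset.range k, σ (n+1+j)) ≤ 2*C*ρ^(n+1) * ∑ j ∈ Finset.range k, ρ^j := by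
          rw [← h2]; exact h1
    _ ≤ 2*C*ρ^(n+1) * (1-ρ)⁻¹ := mul_le_mul_of_nonneg_left h3 h4
    _ = 2*C*(1-ρ)⁻¹ * ρ^(n+1) := by ring
  have hQdiff : ∀ (x : X) (m n : ℕ), 1 ≤ n → n ≤ m →
      Q (u x m - u x n) ≤ (2*C*(1-ρ)⁻¹*εp) * ρ^n := by
    intro x m n h1 h2
    obtain ⟨a, rfl⟩ : ∃ a, n = a+1 := ⟨n-1, by omega⟩
    obtain ⟨k, rfl⟩ : ∃ k, m = (a+1)+k := ⟨m-(a+1), by omega⟩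
    calc Q (u x (a+1+k) - u x (a+1)) ≤ (∑ j ∈ Finset.range k, σ (a+1+j)) * εp := htelx x a k
    _ ≤ (2*C*(1-ρ)⁻¹ * ρ^(a+1)) * εp := mul_le_mul_of_nonneg_right (hgeosum a k) hεp
    _ = (2*C*(1-ρ)⁻¹*εp) * ρ^(a+1) := by ring
  have hcau : ∀ x : X, ∀ δ > (0:ℝ), ∃ M : ℕ, ∀ m n, M ≤ m → M ≤ n → q (u x m - u x n) < δ := by
    intro x δ hδ
    have hδp : 0 < δ^p := Real.rpow_pos_of_pos hδ p
    have hK : (0:ℝ) ≤ 2*C*(1-ρ)⁻¹*εp := by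
      have := mul_nonneg (mul_nonneg (mul_nonneg (by norm_num : (0:ℝ) ≤ 2) hC0) hK0) hεp
      linarith
    obtain ⟨N, hN⟩ := hsmall (2*C*(1-ρ)⁻¹*εp) (δ^p) hK hδp
    refine ⟨N+1, ?_⟩
    have main : ∀ m n, N+1 ≤ n → n ≤ m → q (u x m - u x n) < δ := by
      intro m n h1 h2
      apply hQlt _ _ hδ.le
      calc Q (u x m - u x n) ≤ (2*C*(1-ρ)⁻¹*εp) * ρ^n := hQdiff x m n (by omega) h2
      _ < δ^p := hN n (by omega)
    intro m n hm hn
    rcases le_total n m with h | h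
    · exact main m n hn h
    · rw [show u x m - u x n = -(u x n - u x m) from by abel, hqneg]
      exact main n m hm h
  choose g hg using fun x => hcomp (u x) (hcau x)
  have hQconv : ∀ x : X, ∀ η, 0 < η → ∃ M, ∀ n, M ≤ n → Q (u x n - g x) < η := by
    intro x η hη
    obtain ⟨M, hM⟩ := hg x (η^(1/p)) (Real.rpow_pos_of_pos hη _)
    refine ⟨M, fun n hn => ?_⟩
    have h := hQlt' _ _ (hM n hn)
    rwa [one_div, Real.rpow_inv_rpow hη.le hp0.ne'] at h
  -- additivity of g
  have hmid : ∀ (x y : X) (n : ℕ), perp x y → Q (u (x+y) n - u x n - u y n) ≤ τ n * εp := by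
    intro x y n hxy
    have hΔ : Q (f ((2^n:ℕ)•(x+y)) - f ((2^n:ℕ)•x) - f ((2^n:ℕ)•y)) ≤ εp := by
      have h := hfQ _ _ (hppow n x y hxy)
      rwa [← smul_add] at h
    have hΔ' : Q (f (-((2^n:ℕ)•(x+y))) - f (-((2^n:ℕ)•x)) - f (-((2^n:ℕ)•y))) ≤ εp := by
      have h := hfQ _ _ (hpnegneg _ _ (hppow n x y hxy))
      rwa [show -((2^n:ℕ)•x) + -((2^n:ℕ)•y) = -((2^n:ℕ)•(x+y)) from by rw [smul_add]; abel] at h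
    have key : u (x+y) n - u x n - u y n
        = ccc n • (f ((2^n:ℕ)•(x+y)) - f ((2^n:ℕ)•x) - f ((2^n:ℕ)•y))
          - ddd n • (f (-((2^n:ℕ)•(x+y))) - f (-((2^n:ℕ)•x)) - f (-((2^n:ℕ)•y))) := by
      simp only [hudef]
      module
    rw [key]
    have b1 : Q (ccc n • (f ((2^n:ℕ)•(x+y)) - f ((2^n:ℕ)•x) - f ((2^n:ℕ)•y))) ≤ ccc n ^ p * εp := by
      rw [hQsmul, abs_of_nonneg (ccc_nonneg _)]
      exact mul_le_mul_of_nonneg_left hΔ (Real.rpow_nonneg (ccc_nonneg _) p)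
    have b2 : Q (ddd n • (f (-((2^n:ℕ)•(x+y))) - f (-((2^n:ℕ)•x)) - f (-((2^n:ℕ)•y))))
        ≤ ddd n ^ p * εp := by
      rw [hQsmul, abs_of_nonneg (ddd_nonneg _)]
      exact mul_le_mul_of_nonneg_left hΔ' (Real.rpow_nonneg (ddd_nonneg _) p)
    have hs := hQsub (ccc n • (f ((2^n:ℕ)•(x+y)) - f ((2^n:ℕ)•x) - f ((2^n:ℕ)•y)))
      (ddd n • (f (-((2^n:ℕ)•(x+y))) - f (-((2^n:ℕ)•x)) - f (-((2^n:ℕ)•y))))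
    have : τ n * εp = ccc n ^ p * εp + ddd n ^ p * εp := by simp only [hτdef]; ring
    linarith
  have hadd : ∀ x y, perp x y → g (x+y) = g x + g y := by
    intro x y hxy
    have hzero : g (x+y) - g x - g y = 0 := by
      apply hQeq0
      by_contra hpos
      push_neg at hpos
      obtain ⟨M1, h1⟩ := hQconv (x+y) (Q (g (x+y) - g x - g y)/4) (by linarith)
      obtain ⟨M2, h2⟩ := hQconv x (Q (g (x+y) - g x - g y)/4) (by linarith)
      obtain ⟨M3, h3⟩ := hQconv y (Q (g (x+y) - g x - g y)/4) (by linarith)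
      obtain ⟨N4, h4⟩ := hsmall (2*εp) (Q (g (x+y) - g x - g y)/4)
        (mul_nonneg (by norm_num) hεp) (by linarith)
      obtain ⟨n, hn1, hn2, hn3, hn4⟩ : ∃ n : ℕ, M1 ≤ n ∧ M2 ≤ n ∧ M3 ≤ n ∧ N4 ≤ n :=
        ⟨max (max M1 M2) (max M3 N4), by omega, by omega, by omega, by omega⟩
      have e : g (x+y) - g x - g y = -(u (x+y) n - g (x+y)) + (u (x+y) n - u x n - u y n)
          + (u x n - g x) + (u y n - g y) := by abel
      have q1 := h1 n hn1
      have q2 := h2 n hn2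
      have q3 := h3 n hn3
      have q4 : τ n * εp < Q (g (x+y) - g x - g y)/4 := by
        have ha := h4 n hn4
        have hb2 := hτle n
        nlinarith [pow_nonneg hρ0 n, hεp]
      have qmid := hmid x y n hxy
      have hsplit : Q (g (x+y) - g x - g y) ≤ Q (u (x+y) n - g (x+y))
          + Q (u (x+y) n - u x n - u y n) + Q (u x n - g x) + Q (u y n - g y) := by
        rw [e]
        have s1 := hQadd (-(u (x+y) n - g (x+y)) + (u (x+y) n - u x n - u y n)
          + (u x n - g x)) (u y n - g y)
        have s2 := hQadd (-(u (x+y) n - g (x+y)) + (u (x+y) n - u x n - u y n))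
          (u x n - g x)
        have s3 := hQadd (-(u (x+y) n - g (x+y))) (u (x+y) n - u x n - u y n)
        rw [hQneg] at s3
        linarith
      linarith
    have h2 : g (x+y) - (g x + g y) = 0 := by rw [← sub_sub]; exact hzero
    exact sub_eq_zero.mp h2
  -- the approximation bound
  have hg2 : ∀ x : X, Q (f ((2:ℕ)•x) - g ((2:ℕ)•x)) ≤ b * εp := by
    intro x
    by_contra hc
    push_neg at hc
    obtain ⟨M, hM⟩ := hQconv ((2:ℕ)•x) (Q (f ((2:ℕ)•x) - g ((2:ℕ)•x)) - b*εp) (by linarith)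
    have e : f ((2:ℕ)•x) - g ((2:ℕ)•x) = -(u ((2:ℕ)•x) M - u ((2:ℕ)•x) 0)
        + (u ((2:ℕ)•x) M - g ((2:ℕ)•x)) := by
      rw [hu0 ((2:ℕ)•x)]; abel
    have hsplit : Q (f ((2:ℕ)•x) - g ((2:ℕ)•x)) ≤ Q (u ((2:ℕ)•x) M - u ((2:ℕ)•x) 0)
        + Q (u ((2:ℕ)•x) M - g ((2:ℕ)•x)) := by
      rw [e]
      have s1 := hQadd (-(u ((2:ℕ)•x) M - u ((2:ℕ)•x) 0)) (u ((2:ℕ)•x) M - g ((2:ℕ)•x))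
      rw [hQneg] at s1
      linarith
    have hb1 := htel0 x M
    have hb2 : (∑ n ∈ Finset.range M, σ n) * εp ≤ b * εp := by
      rw [hb']
      exact mul_le_mul_of_nonneg_right (hpartial M) hεp
    have hb3 := hM M (le_refl M)
    linarith
  have hq2 : ∀ x : X, q (f ((2:ℕ)•x) - g ((2:ℕ)•x)) ≤ b^(1/p) * ε := by
    intro x
    apply hQle _ _ (mul_nonneg (Real.rpow_nonneg hb0 _) hε)
    have e : (b^(1/p) * ε)^p = b * εp := by
      rw [Real.mul_rpow (Real.rpow_nonneg hb0 _) hε, one_div, Real.rpow_inv_rpow hb0 hp0.ne',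
        hεpdef]
    rw [e]
    exact hg2 x
  -- uniqueness
  refine ⟨g, hadd, hq2, ?_⟩
  intro g' hadd' hbd' x
  have hQg' : ∀ z : X, Q (f ((2:ℕ)•z) - g' ((2:ℕ)•z)) ≤ b * εp := by
    intro z
    have h := hQle' _ _ (hbd' z)
    rwa [Real.mul_rpow (Real.rpow_nonneg hb0 _) hε, one_div, Real.rpow_inv_rpow hb0 hp0.ne',
      ← hεpdef] at h
  have hGrec : ∀ (G : X → Y), (∀ a bb, perp a bb → G (a + bb) = G a + G bb) → ∀ v : X,
      G ((2:ℕ) • (2:ℕ) • v) = G ((2:ℕ) • v) + G ((2:ℕ) • v) + G ((2:ℕ) • v) + G (-((2:ℕ) • v)) ∧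
      G (-((2:ℕ) • (2:ℕ) • v)) = G (-((2:ℕ) • v)) + G (-((2:ℕ) • v)) + G (-((2:ℕ) • v))
        + G ((2:ℕ) • v) := by
    intro G hG v
    obtain ⟨y, hy1, hy2⟩ := hperp2 v
    have P1 := hp2 _ _ hy2
    have P2 := hp2 _ _ hy1
    have P3 := hpneg1 _ _ P2
    have P4 := hpnegneg _ _ P1
    have P5 := hpnegneg _ _ P2
    have P6 := hpneg2 _ _ P2
    have P7 := hpneg1 _ _ hy2
    have P8 := hpneg2 _ _ hy2
    have P10 := hpnegneg _ _ hy2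
    have E1 : G ((2:ℕ) • (2:ℕ) • v) = G ((2:ℕ) • (v+y)) + G ((2:ℕ) • (v-y)) := by
      have h := hG _ _ P1
      rwa [show (2:ℕ) • (v+y) + (2:ℕ) • (v-y) = (2:ℕ) • (2:ℕ) • v from by abel] at h
    have E2 : G ((2:ℕ) • (v+y)) = G ((2:ℕ) • v) + G ((2:ℕ) • y) := by
      have h := hG _ _ P2
      rwa [show (2:ℕ) • v + (2:ℕ) • y = (2:ℕ) • (v+y) from by abel] at h
    have E3 : G ((2:ℕ) • (v-y)) = G ((2:ℕ) • v) + G (-((2:ℕ) • y)) := by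
      have h := hG _ _ P3
      rwa [show (2:ℕ) • v + -((2:ℕ) • y) = (2:ℕ) • (v-y) from by abel] at h
    have E4 : G (-((2:ℕ) • (2:ℕ) • v)) = G (-((2:ℕ) • (v+y))) + G (-((2:ℕ) • (v-y))) := by
      have h := hG _ _ P4
      rwa [show -((2:ℕ) • (v+y)) + -((2:ℕ) • (v-y)) = -((2:ℕ) • (2:ℕ) • v) from by abel] at h
    have E5 : G (-((2:ℕ) • (v+y))) = G (-((2:ℕ) • v)) + G (-((2:ℕ) • y)) := by
      have h := hG _ _ P5
      rwa [show -((2:ℕ) • v) + -((2:ℕ) • y) = -((2:ℕ) • (v+y)) from by abel] at h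
    have E6 : G (-((2:ℕ) • (v-y))) = G (-((2:ℕ) • v)) + G ((2:ℕ) • y) := by
      have h := hG _ _ P6
      rwa [show -((2:ℕ) • v) + (2:ℕ) • y = -((2:ℕ) • (v-y)) from by abel] at h
    have E7 : G ((2:ℕ) • y) = G (v+y) + G (-(v-y)) := by
      have h := hG _ _ P7
      rwa [show (v+y) + -(v-y) = (2:ℕ) • y from by abel] at h
    have E8 : G (-((2:ℕ) • y)) = G (-(v+y)) + G (v-y) := by
      have h := hG _ _ P8
      rwa [show -(v+y) + (v-y) = -((2:ℕ) • y) from by abel] at h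
    have E9 : G ((2:ℕ) • v) = G (v+y) + G (v-y) := by
      have h := hG _ _ hy2
      rwa [show (v+y) + (v-y) = (2:ℕ) • v from by abel] at h
    have E10 : G (-((2:ℕ) • v)) = G (-(v+y)) + G (-(v-y)) := by
      have h := hG _ _ P10
      rwa [show -(v+y) + -(v-y) = -((2:ℕ) • v) from by abel] at h
    constructor
    · rw [E1, E2, E3, E7, E8, E9, E10]
      abel
    · rw [E4, E5, E6, E7, E8, E9, E10]
      abel
  have hH : ∀ n : ℕ, ccc n • (g ((2^n:ℕ) • ((2:ℕ) • x)) - g' ((2^n:ℕ) • ((2:ℕ) • x)))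
      - ddd n • (g (-((2^n:ℕ) • ((2:ℕ) • x))) - g' (-((2^n:ℕ) • ((2:ℕ) • x))))
      = g ((2:ℕ) • x) - g' ((2:ℕ) • x) := by
    intro n
    induction n with
    | zero =>
      rw [ccc0, ddd0]
      simp
    | succ m ih =>
      have e1 : (2^(m+1):ℕ) • ((2:ℕ) • x) = (2:ℕ) • (2:ℕ) • ((2^m:ℕ) • x) := by
        rw [smul_smul, smul_smul, smul_smul]; congr 1; ring
      have e2 : (2^m:ℕ) • ((2:ℕ) • x) = (2:ℕ) • ((2^m:ℕ) • x) := by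
        rw [smul_smul, smul_smul]; congr 1; ring
      rw [e1]
      rw [e2] at ih
      obtain ⟨hA, hB⟩ := hGrec g hadd ((2^m:ℕ) • x)
      obtain ⟨hA', hB'⟩ := hGrec g' hadd' ((2^m:ℕ) • x)
      rw [hA, hB, hA', hB', ← ih, ← ccc_id m, ← ddd_id m]
      module
  have hw : ∀ z : X, Q (g ((2:ℕ) • z) - g' ((2:ℕ) • z)) ≤ 2*(b*εp) := by
    intro z
    have e : g ((2:ℕ) • z) - g' ((2:ℕ) • z)
        = -(f ((2:ℕ) • z) - g ((2:ℕ) • z)) + (f ((2:ℕ) • z) - g' ((2:ℕ) • z)) := by abel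
    rw [e]
    have s1 := hQadd (-(f ((2:ℕ) • z) - g ((2:ℕ) • z))) (f ((2:ℕ) • z) - g' ((2:ℕ) • z))
    rw [hQneg] at s1
    linarith [hg2 z, hQg' z]
  have hzero : g ((2:ℕ) • x) - g' ((2:ℕ) • x) = 0 := by
    apply hQeq0
    by_contra hpos
    push_neg at hpos
    obtain ⟨N, hN⟩ := hsmall (2*(2*(b*εp))) (Q (g ((2:ℕ) • x) - g' ((2:ℕ) • x)))
      (by nlinarith [mul_nonneg hb0 hεp]) hpos
    have key := hH N
    have e2 : (2^N:ℕ) • ((2:ℕ) • x) = (2:ℕ) • ((2^N:ℕ) • x) := by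
      rw [smul_smul, smul_smul]; congr 1; ring
    have e3 : -((2^N:ℕ) • ((2:ℕ) • x)) = (2:ℕ) • (-((2^N:ℕ) • x)) := by
      rw [e2, smul_neg]
    have hb1 : Q (g ((2^N:ℕ) • ((2:ℕ) • x)) - g' ((2^N:ℕ) • ((2:ℕ) • x))) ≤ 2*(b*εp) := by
      rw [e2]; exact hw ((2^N:ℕ) • x)
    have hb2 : Q (g (-((2^N:ℕ) • ((2:ℕ) • x))) - g' (-((2^N:ℕ) • ((2:ℕ) • x)))) ≤ 2*(b*εp) := by
      rw [e3]; exact hw (-((2^N:ℕ) • x))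
    have hQη : Q (g ((2:ℕ) • x) - g' ((2:ℕ) • x)) ≤ τ N * (2*(b*εp)) := by
      rw [← key]
      have s1 := hQsub (ccc N • (g ((2^N:ℕ) • ((2:ℕ) • x)) - g' ((2^N:ℕ) • ((2:ℕ) • x))))
        (ddd N • (g (-((2^N:ℕ) • ((2:ℕ) • x))) - g' (-((2^N:ℕ) • ((2:ℕ) • x)))))
      rw [hQsmul, hQsmul, abs_of_nonneg (ccc_nonneg N), abs_of_nonneg (ddd_nonneg N)] at s1
      have m1 := mul_le_mul_of_nonneg_left hb1 (Real.rpow_nonneg (ccc_nonneg N) p)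
      have m2 := mul_le_mul_of_nonneg_left hb2 (Real.rpow_nonneg (ddd_nonneg N) p)
      have ht : τ N * (2*(b*εp)) = ccc N ^ p * (2*(b*εp)) + ddd N ^ p * (2*(b*εp)) := by
        rw [hτdef]; ring
      linarith
    have hfin := hN N (le_refl N)
    have hgl := hτle N
    nlinarith [mul_nonneg hb0 hεp, pow_nonneg hρ0 N]
  exact (sub_eq_zero.mp hzero).symm
end
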